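/- arXiv:0812.4518 — 6 statements merged into one kernel-verified Lean document; each statement's English description precedes it below -/
import Mathlib

section
/- The linear map g : V → V preserves the bilinear form B (i.e. B(g x, g y) = B(x, y) for all x, y ∈ V), satisfies g⁵ = id and g ≠ id, and maps the subgroup L onto itself; hence g restricts to an isometry of the lattice L of order exactly 5. -/
noncomputable section

abbrev V : Type := Fin 4 → Fin 4 → ℚ

/-- The `A₄` Cartan matrix. -/
def CartanA4 : Matrix (Fin 4) (Fin 4) ℤ :=
  Matrix.of fun i k =>
    if i = k then 2 else if i.val + 1 = k.val ∨ k.val + 1 = i.val then -1 else 0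

/-- The bilinear form of the lattice `A₄(-2)^{⊕ 4}` on `V`. -/
def B (x y : V) : ℚ :=
  -2 * ∑ j : Fin 4, ∑ i : Fin 4, ∑ k : Fin 4, x j i * (CartanA4 i k : ℚ) * y j k

/-- The standard basis vector `a_{j,i}` (the `i`-th simple root of the `j`-th copy of `A₄`). -/
def a (j i : Fin 4) : V := fun j' i' => if j' = j ∧ i' = i then 1 else 0

/-- The subgroup `N ⊆ V` of integer-valued vectors, i.e. the lattice `A₄(-2)^{⊕ 4}`. -/
def N : AddSubgroup V :=
  AddSubgroup.pi Set.univ fun _ => AddSubgroup.pi Set.univ fun _ => (Int.castAddHom ℚ).range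

/-- The map acting as `γ : α₁ ↦ α₂ ↦ α₃ ↦ α₄ ↦ -(α₁+α₂+α₃+α₄)` on each copy of `A₄`. -/
def g (x : V) : V := fun j => ![-(x j 3), x j 0 - x j 3, x j 1 - x j 3, x j 2 - x j 3]

def μ : V := (1/2 : ℚ) • (a 0 0 + a 1 0 + a 2 0 + a 3 0)

def ν : V := (1/2 : ℚ) • (a 1 0 + a 2 2 + a 2 3 + a 3 0 + a 3 2 + a 3 3)

/-- The overlattice `L` generated by `N` and the vectors `gⁱ(μ)`, `gⁱ(ν)`, `i = 0,1,2,3`. -/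
def L : AddSubgroup V :=
  N ⊔ AddSubgroup.closure {x : V | ∃ i : Fin 4, x = g^[(i : ℕ)] μ ∨ x = g^[(i : ℕ)] ν}

def e : Fin 8 → V :=
  ![μ, g^[2] μ + g^[3] μ, ν, μ + g^[2] μ + g^[3] μ - g^[2] ν - g^[3] ν,
    a 0 0, a 0 2 + a 0 3, a 1 0, a 1 2 + a 1 3]

def f : Fin 8 → V := fun i => g (e i)

/-- The involution `h`, acting on each copy of `A₄` by `a₁ ↦ -a₁`, `a₂ ↦ a₁+a₂+a₃+a₄`,
`a₃ ↦ -a₄`, `a₄ ↦ -a₃`. -/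
def h (x : V) : V := fun j => ![x j 1 - x j 0, x j 1, x j 1 - x j 3, x j 1 - x j 2]

lemma g5 (x : V) : g (g (g (g (g x)))) = x := by
  funext j i
  fin_cases i <;> simp [g, Matrix.vecHead, Matrix.vecTail] <;> ring

lemma sum5 (x : V) : x + g x + g (g x) + g (g (g x)) + g (g (g (g x))) = 0 := by
  funext j i
  fin_cases i <;>
    simp [g, Matrix.vecHead, Matrix.vecTail, show (Fin.succ 2 : Fin 4) = 3 from rfl] <;> ring

lemma innerSum4 (u v : Fin 4 → ℚ) : ∑ i : Fin 4, ∑ k : Fin 4, u i * (CartanA4 i k : ℚ) * v k =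
    2*u 0*v 0 - u 0*v 1 - u 1*v 0 + 2*u 1*v 1 - u 1*v 2 - u 2*v 1 + 2*u 2*v 2
      - u 2*v 3 - u 3*v 2 + 2*u 3*v 3 := by
  simp [CartanA4, Fin.sum_univ_four]
  norm_num [show ((3:Fin 4):ℕ)=3 from rfl, show ((2:Fin 4):ℕ)=2 from rfl,
    show ((1:Fin 4):ℕ)=1 from rfl, show ((0:Fin 4):ℕ)=0 from rfl]
  ring

lemma B_inv (x y : V) : B (g x) (g y) = B x y := by
  simp only [B, innerSum4]
  congr 1
  apply Finset.sum_congr rfl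
  intro j _
  simp [g, Matrix.vecHead, Matrix.vecTail, show (Fin.succ 2 : Fin 4) = 3 from rfl]
  ring

/-- `g` as an additive homomorphism. -/
def gAdd : V →+ V where
  toFun := g
  map_zero' := by funext j i; fin_cases i <;> simp [g]
  map_add' x y := by
    funext j i
    fin_cases i <;> simp [g, Matrix.vecHead, Matrix.vecTail] <;> ring

lemma mem_N_iff (x : V) : x ∈ N ↔ ∀ j i : Fin 4, ∃ n : ℤ, (n : ℚ) = x j i := by
  simp [N, AddSubgroup.mem_pi, Int.castAddHom]

lemma g_mem_N {x : V} (hx : x ∈ N) : g x ∈ N := by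
  rw [mem_N_iff] at hx ⊢
  intro j i
  obtain ⟨n0, h0⟩ := hx j 0
  obtain ⟨n1, h1⟩ := hx j 1
  obtain ⟨n2, h2⟩ := hx j 2
  obtain ⟨n3, h3⟩ := hx j 3
  fin_cases i
  · exact ⟨-n3, by simp [g, ← h3]⟩
  · exact ⟨n0 - n3, by simp [g, ← h0, ← h3]⟩
  · exact ⟨n1 - n3, by simp [g, Matrix.vecHead, Matrix.vecTail, ← h1, ← h3]⟩
  · exact ⟨n2 - n3, by simp [g, Matrix.vecHead, Matrix.vecTail, ← h2, ← h3]⟩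

def S : Set V := {x : V | ∃ i : Fin 4, x = g^[(i : ℕ)] μ ∨ x = g^[(i : ℕ)] ν}

lemma iter_mem_L (k : Fin 4) : g^[(k : ℕ)] μ ∈ L ∧ g^[(k : ℕ)] ν ∈ L :=
  ⟨AddSubgroup.mem_sup_right (AddSubgroup.subset_closure ⟨k, Or.inl rfl⟩),
   AddSubgroup.mem_sup_right (AddSubgroup.subset_closure ⟨k, Or.inr rfl⟩)⟩

lemma g4_mem_L (w : V) (h0 : w ∈ L) (h1 : g w ∈ L) (h2 : g (g w) ∈ L)
    (h3 : g (g (g w)) ∈ L) : g (g (g (g w))) ∈ L := by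
  have := sum5 w
  have key : g (g (g (g w))) = -(w + g w + g (g w) + g (g (g w))) := by
    rw [eq_neg_iff_add_eq_zero]; linear_combination this
  rw [key]
  exact neg_mem (add_mem (add_mem (add_mem h0 h1) h2) h3)

lemma g_mem_L {x : V} (hx : x ∈ L) : g x ∈ L := by
  have : L.map gAdd ≤ L := by
    rw [L, AddSubgroup.map_sup]
    apply sup_le
    · rintro _ ⟨y, hy, rfl⟩
      exact AddSubgroup.mem_sup_left (g_mem_N hy)
    · rw [AddMonoidHom.map_closure]
      apply (AddSubgroup.closure_le _).mpr
      rintro _ ⟨y, ⟨i, hi⟩, rfl⟩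
      have hμ : ∀ k : Fin 4, g^[(k : ℕ)] μ ∈ L := fun k => (iter_mem_L k).1
      have hν : ∀ k : Fin 4, g^[(k : ℕ)] ν ∈ L := fun k => (iter_mem_L k).2
      fin_cases i <;> rcases hi with rfl | rfl <;>
        simp only [Fin.isValue, Fin.val_zero, Fin.val_one, Fin.val_two,
          show ((3:Fin 4):ℕ) = 3 from rfl, Function.iterate_succ_apply',
          Function.iterate_zero_apply, gAdd, AddMonoidHom.coe_mk, ZeroHom.coe_mk]
      · exact hμ 1
      · exact hν 1
      · exact hμ 2
      · exact hν 2
      · exact hμ 3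
      · exact hν 3
      · exact g4_mem_L μ (hμ 0) (hμ 1) (hμ 2) (hμ 3)
      · exact g4_mem_L ν (hν 0) (hν 1) (hν 2) (hν 3)
  exact this ⟨x, hx, rfl⟩

lemma a00_mem_N : a 0 0 ∈ N := by
  rw [mem_N_iff]
  intro j i
  by_cases hc : j = 0 ∧ i = 0
  · exact ⟨1, by simp [a, hc]⟩
  · exact ⟨0, by simp [a, hc]⟩

lemma g_a00_ne : g (a 0 0) ≠ a 0 0 := by
  intro hcontra
  have := congrFun (congrFun hcontra 0) 1
  simp [g, a] at this

/-- `g` preserves `B`, has `g⁵ = id`, `g ≠ id`, and maps `L` onto itself; hence it restricts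
to an isometry of the lattice `L` of order exactly `5`. -/
theorem stmt0 :
    (∀ x y : V, B (g x) (g y) = B x y) ∧
    (∀ x : V, g (g (g (g (g x)))) = x) ∧
    g ≠ id ∧
    g '' (L : Set V) = (L : Set V) ∧
    ∃ x ∈ L, g x ≠ x := by
  refine ⟨B_inv, g5, ?_, ?_, ?_⟩
  · intro hg
    exact g_a00_ne (by rw [hg]; rfl)
  · ext y
    constructor
    · rintro ⟨x, hx, rfl⟩
      exact g_mem_L hx
    · intro hy
      exact ⟨g (g (g (g y))), g_mem_L (g_mem_L (g_mem_L (g_mem_L hy))), g5 y⟩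
  · exact ⟨a 0 0, AddSubgroup.mem_sup_left a00_mem_N, g_a00_ne⟩

end
end

section
/- L is an even integral lattice of rank 16 containing N: for all x, y ∈ L one has B(x, y) ∈ ℤ, for all x ∈ L one has B(x, x) ∈ 2ℤ, N ⊆ L, and L spans V over ℚ. -/
noncomputable section

def Sg : Set V := {x : V | ∃ i : Fin 4, x = g^[(i : ℕ)] μ ∨ x = g^[(i : ℕ)] ν}

lemma L_eq : L = N ⊔ AddSubgroup.closure Sg := rfl

lemma lemv3 : ((3 : Fin 4) : ℕ) = 3 := rfl

lemma lemNofInt (x : V) (hx : ∀ j i, ∃ m : ℤ, x j i = (m : ℚ)) : x ∈ N := by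
  intro j _ i _
  obtain ⟨m, hm⟩ := hx j i
  exact ⟨m, hm.symm⟩

lemma lemNint (x : V) (hx : x ∈ N) : ∃ u : Fin 4 → Fin 4 → ℤ, ∀ j i, x j i = (u j i : ℚ) := by
  have h : ∀ j i : Fin 4, ∃ m : ℤ, x j i = (m : ℚ) := by
    intro j i
    obtain ⟨m, hm⟩ := hx j (Set.mem_univ j) i (Set.mem_univ i)
    exact ⟨m, hm.symm⟩
  choose u hu using h
  exact ⟨u, hu⟩

lemma aN (j i : Fin 4) : a j i ∈ N := by
  apply lemNofInt
  intro j' i'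
  by_cases hc : j' = j ∧ i' = i
  · exact ⟨1, by simp [a, hc]⟩
  · exact ⟨0, by simp [a, hc]⟩

lemma B_add_left (x x' y : V) : B (x + x') y = B x y + B x' y := by
  simp only [B, Pi.add_apply, add_mul, Finset.sum_add_distrib]; ring
lemma B_add_right (x y y' : V) : B x (y + y') = B x y + B x y' := by
  simp only [B, Pi.add_apply, mul_add, Finset.sum_add_distrib]
lemma B_neg_left (x y : V) : B (-x) y = - B x y := by
  simp only [B, Pi.neg_apply, neg_mul, Finset.sum_neg_distrib]; ring
lemma B_zero_left (y : V) : B 0 y = 0 := by simp [B]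
lemma B_comm (x y : V) : B x y = B y x := by
  have hC : ∀ i k : Fin 4, CartanA4 i k = CartanA4 k i := by
    intro i k; fin_cases i <;> fin_cases k <;> rfl
  simp only [B]
  congr 1
  refine Finset.sum_congr rfl fun j _ => ?_
  rw [Finset.sum_comm]
  refine Finset.sum_congr rfl fun k _ => Finset.sum_congr rfl fun i _ => ?_
  rw [hC]; ring
lemma B_neg_right (x y : V) : B x (-y) = - B x y := by
  rw [B_comm, B_neg_left, B_comm]
lemma B_zero_right (x : V) : B x 0 = 0 := by rw [B_comm, B_zero_left]
lemma B_smul_right (c : ℚ) (x y : V) : B x (c • y) = c * B x y := by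
  simp only [B, Pi.smul_apply, smul_eq_mul, Fin.sum_univ_four]; ring

lemma lemNN (x : V) (hx : x ∈ N) (y : V) (hy : y ∈ N) : ∃ n : ℤ, B x y = 2 * (n : ℚ) := by
  obtain ⟨u, hu⟩ := lemNint x hx
  obtain ⟨v, hv⟩ := lemNint y hy
  refine ⟨-∑ j : Fin 4, ∑ i : Fin 4, ∑ k : Fin 4, u j i * CartanA4 i k * v j k, ?_⟩
  have hterm : ∀ j i k : Fin 4,
      x j i * (CartanA4 i k : ℚ) * y j k = ((u j i * CartanA4 i k * v j k : ℤ) : ℚ) := by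
    intro j i k; rw [hu, hv]; push_cast; ring
  have : B x y = -2 * ∑ j : Fin 4, ∑ i : Fin 4, ∑ k : Fin 4,
      ((u j i * CartanA4 i k * v j k : ℤ) : ℚ) := by
    unfold B
    congr 1
    exact Finset.sum_congr rfl fun j _ => Finset.sum_congr rfl fun i _ =>
      Finset.sum_congr rfl fun k _ => hterm j i k
  rw [this]; push_cast; ring

/-- The subgroup of `x` with `2 • x ∈ N`. -/
def M : AddSubgroup V where
  carrier := {x : V | (2 : ℚ) • x ∈ N}
  zero_mem' := by simp only [Set.mem_setOf_eq, smul_zero]; exact zero_mem N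
  add_mem' := by
    intro x y hx hy
    simp only [Set.mem_setOf_eq, smul_add] at *
    exact add_mem hx hy
  neg_mem' := by
    intro x hx
    simp only [Set.mem_setOf_eq, smul_neg] at *
    exact neg_mem hx

lemma gN (x : V) (hx : x ∈ N) : g x ∈ N := by
  obtain ⟨u, hu⟩ := lemNint x hx
  apply lemNofInt
  intro j i
  fin_cases i
  · exact ⟨-u j 3, by show -(x j 3) = _; rw [hu]; push_cast; ring⟩
  · exact ⟨u j 0 - u j 3, by show x j 0 - x j 3 = _; rw [hu, hu]; push_cast; ring⟩
  · exact ⟨u j 1 - u j 3, by show x j 1 - x j 3 = _; rw [hu, hu]; push_cast; ring⟩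
  · exact ⟨u j 2 - u j 3, by show x j 2 - x j 3 = _; rw [hu, hu]; push_cast; ring⟩

lemma g_smul (c : ℚ) (x : V) : g (c • x) = c • g x := by
  funext j i
  fin_cases i <;> simp [g] <;> ring

lemma two_mu_N : (2 : ℚ) • μ ∈ N := by
  have : (2 : ℚ) • μ = a 0 0 + a 1 0 + a 2 0 + a 3 0 := by
    rw [μ, smul_smul]; norm_num
  rw [this]
  exact add_mem (add_mem (add_mem (aN 0 0) (aN 1 0)) (aN 2 0)) (aN 3 0)

lemma two_nu_N : (2 : ℚ) • ν ∈ N := by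
  have : (2 : ℚ) • ν = a 1 0 + a 2 2 + a 2 3 + a 3 0 + a 3 2 + a 3 3 := by
    rw [ν, smul_smul]; norm_num
  rw [this]
  exact add_mem (add_mem (add_mem (add_mem (add_mem (aN 1 0) (aN 2 2)) (aN 2 3)) (aN 3 0))
    (aN 3 2)) (aN 3 3)

lemma SgM : Sg ⊆ (M : Set V) := by
  rintro x ⟨i, rfl | rfl⟩ <;> fin_cases i
  · exact two_mu_N
  · show (2 : ℚ) • g μ ∈ N; rw [← g_smul]; exact gN _ two_mu_N
  · show (2 : ℚ) • g (g μ) ∈ N; rw [← g_smul, ← g_smul]; exact gN _ (gN _ two_mu_N)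
  · show (2 : ℚ) • g (g (g μ)) ∈ N
    rw [← g_smul, ← g_smul, ← g_smul]; exact gN _ (gN _ (gN _ two_mu_N))
  · exact two_nu_N
  · show (2 : ℚ) • g ν ∈ N; rw [← g_smul]; exact gN _ two_nu_N
  · show (2 : ℚ) • g (g ν) ∈ N; rw [← g_smul, ← g_smul]; exact gN _ (gN _ two_nu_N)
  · show (2 : ℚ) • g (g (g ν)) ∈ N
    rw [← g_smul, ← g_smul, ← g_smul]; exact gN _ (gN _ (gN _ two_nu_N))

lemma closureSgM : AddSubgroup.closure Sg ≤ M := (AddSubgroup.closure_le M).mpr SgM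

lemma lemNC (x : V) (hx : x ∈ N) (y : V) (hy : y ∈ AddSubgroup.closure Sg) :
    ∃ n : ℤ, B x y = (n : ℚ) := by
  have h2y : (2 : ℚ) • y ∈ N := closureSgM hy
  obtain ⟨n, hn⟩ := lemNN x hx _ h2y
  rw [B_smul_right] at hn
  exact ⟨n, by linarith⟩

def W : Fin 8 → V := ![μ, g μ, g (g μ), g (g (g μ)), ν, g ν, g (g ν), g (g (g ν))]

lemma hSW : ∀ x ∈ Sg, ∃ p : Fin 8, x = W p := by
  rintro x ⟨i, rfl | rfl⟩ <;> fin_cases i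
  · exact ⟨0, rfl⟩
  · exact ⟨1, rfl⟩
  · exact ⟨2, rfl⟩
  · exact ⟨3, rfl⟩
  · exact ⟨4, rfl⟩
  · exact ⟨5, rfl⟩
  · exact ⟨6, rfl⟩
  · exact ⟨7, rfl⟩

set_option maxHeartbeats 4000000 in
lemma tblhalf : ∀ p q : Fin 8, p ≤ q → ∃ n : ℤ, B (W p) (W q) = (n : ℚ) := by
  intro p q hpq
  fin_cases p <;> fin_cases q
  · exact ⟨-4, by show B (μ) (μ) = ((-4 : ℤ) : ℚ); simp only [B, Fin.sum_univ_four]; simp [g, μ, ν, a, CartanA4]; norm_num⟩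
  · exact ⟨2, by show B (μ) (g μ) = ((2 : ℤ) : ℚ); simp only [B, Fin.sum_univ_four]; simp [g, μ, ν, a, CartanA4]; norm_num⟩
  · exact ⟨0, by show B (μ) (g (g μ)) = ((0 : ℤ) : ℚ); simp only [B, Fin.sum_univ_four]; simp [g, μ, ν, a, CartanA4]⟩
  · exact ⟨0, by show B (μ) (g (g (g μ))) = ((0 : ℤ) : ℚ); simp only [B, Fin.sum_univ_four]; simp [g, μ, ν, a, CartanA4]⟩
  · exact ⟨-2, by show B (μ) (ν) = ((-2 : ℤ) : ℚ); simp only [B, Fin.sum_univ_four]; simp [g, μ, ν, a, CartanA4]; norm_num⟩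
  · exact ⟨2, by show B (μ) (g ν) = ((2 : ℤ) : ℚ); simp only [B, Fin.sum_univ_four]; simp [g, μ, ν, a, CartanA4]; norm_num⟩
  · exact ⟨-1, by show B (μ) (g (g ν)) = ((-1 : ℤ) : ℚ); simp only [B, Fin.sum_univ_four]; simp [g, μ, ν, a, CartanA4]; norm_num⟩
  · exact ⟨-1, by show B (μ) (g (g (g ν))) = ((-1 : ℤ) : ℚ); simp only [B, Fin.sum_univ_four]; simp [g, μ, ν, a, CartanA4]; norm_num⟩
  · exact absurd hpq (by decide)
  · exact ⟨-4, by show B (g μ) (g μ) = ((-4 : ℤ) : ℚ); simp only [B, Fin.sum_univ_four]; simp [g, μ, ν, a, CartanA4]; norm_num⟩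
  · exact ⟨2, by show B (g μ) (g (g μ)) = ((2 : ℤ) : ℚ); simp only [B, Fin.sum_univ_four]; simp [g, μ, ν, a, CartanA4]; norm_num⟩
  · exact ⟨0, by show B (g μ) (g (g (g μ))) = ((0 : ℤ) : ℚ); simp only [B, Fin.sum_univ_four]; simp [g, μ, ν, a, CartanA4]⟩
  · exact ⟨2, by show B (g μ) (ν) = ((2 : ℤ) : ℚ); simp only [B, Fin.sum_univ_four]; simp [g, μ, ν, a, CartanA4]; norm_num⟩
  · exact ⟨-2, by show B (g μ) (g ν) = ((-2 : ℤ) : ℚ); simp only [B, Fin.sum_univ_four]; simp [g, μ, ν, a, CartanA4]; norm_num⟩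
  · exact ⟨2, by show B (g μ) (g (g ν)) = ((2 : ℤ) : ℚ); simp only [B, Fin.sum_univ_four]; simp [g, μ, ν, a, CartanA4]; norm_num⟩
  · exact ⟨-1, by show B (g μ) (g (g (g ν))) = ((-1 : ℤ) : ℚ); simp only [B, Fin.sum_univ_four]; simp [g, μ, ν, a, CartanA4]; norm_num⟩
  · exact absurd hpq (by decide)
  · exact absurd hpq (by decide)
  · exact ⟨-4, by show B (g (g μ)) (g (g μ)) = ((-4 : ℤ) : ℚ); simp only [B, Fin.sum_univ_four]; simp [g, μ, ν, a, CartanA4]; norm_num⟩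
  · exact ⟨2, by show B (g (g μ)) (g (g (g μ))) = ((2 : ℤ) : ℚ); simp only [B, Fin.sum_univ_four]; simp [g, μ, ν, a, CartanA4]; norm_num⟩
  · exact ⟨-1, by show B (g (g μ)) (ν) = ((-1 : ℤ) : ℚ); simp only [B, Fin.sum_univ_four]; simp [g, μ, ν, a, CartanA4]; norm_num⟩
  · exact ⟨2, by show B (g (g μ)) (g ν) = ((2 : ℤ) : ℚ); simp only [B, Fin.sum_univ_four]; simp [g, μ, ν, a, CartanA4]; norm_num⟩
  · exact ⟨-2, by show B (g (g μ)) (g (g ν)) = ((-2 : ℤ) : ℚ); simp only [B, Fin.sum_univ_four]; simp [g, μ, ν, a, CartanA4]; norm_num⟩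
  · exact ⟨2, by show B (g (g μ)) (g (g (g ν))) = ((2 : ℤ) : ℚ); simp only [B, Fin.sum_univ_four]; simp [g, μ, ν, a, CartanA4]; norm_num⟩
  · exact absurd hpq (by decide)
  · exact absurd hpq (by decide)
  · exact absurd hpq (by decide)
  · exact ⟨-4, by show B (g (g (g μ))) (g (g (g μ))) = ((-4 : ℤ) : ℚ); simp only [B, Fin.sum_univ_four]; simp [g, μ, ν, a, CartanA4]; norm_num⟩
  · exact ⟨-1, by show B (g (g (g μ))) (ν) = ((-1 : ℤ) : ℚ); simp only [B, Fin.sum_univ_four]; simp [g, μ, ν, a, CartanA4]; norm_num⟩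
  · exact ⟨-1, by show B (g (g (g μ))) (g ν) = ((-1 : ℤ) : ℚ); simp only [B, Fin.sum_univ_four]; simp [g, μ, ν, a, CartanA4]; norm_num⟩
  · exact ⟨2, by show B (g (g (g μ))) (g (g ν)) = ((2 : ℤ) : ℚ); simp only [B, Fin.sum_univ_four]; simp [g, μ, ν, a, CartanA4]; norm_num⟩
  · exact ⟨-2, by show B (g (g (g μ))) (g (g (g ν))) = ((-2 : ℤ) : ℚ); simp only [B, Fin.sum_univ_four]; simp [g, μ, ν, a, CartanA4]; norm_num⟩
  · exact absurd hpq (by decide)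
  · exact absurd hpq (by decide)
  · exact absurd hpq (by decide)
  · exact absurd hpq (by decide)
  · exact ⟨-4, by show B (ν) (ν) = ((-4 : ℤ) : ℚ); simp only [B, Fin.sum_univ_four]; simp [g, μ, ν, a, CartanA4]; norm_num⟩
  · exact ⟨2, by show B (ν) (g ν) = ((2 : ℤ) : ℚ); simp only [B, Fin.sum_univ_four]; simp [g, μ, ν, a, CartanA4]; norm_num⟩
  · exact ⟨0, by show B (ν) (g (g ν)) = ((0 : ℤ) : ℚ); simp only [B, Fin.sum_univ_four]; simp [g, μ, ν, a, CartanA4]; norm_num⟩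
  · exact ⟨0, by show B (ν) (g (g (g ν))) = ((0 : ℤ) : ℚ); simp only [B, Fin.sum_univ_four]; simp [g, μ, ν, a, CartanA4]; norm_num⟩
  · exact absurd hpq (by decide)
  · exact absurd hpq (by decide)
  · exact absurd hpq (by decide)
  · exact absurd hpq (by decide)
  · exact absurd hpq (by decide)
  · exact ⟨-4, by show B (g ν) (g ν) = ((-4 : ℤ) : ℚ); simp only [B, Fin.sum_univ_four]; simp [g, μ, ν, a, CartanA4]; norm_num⟩
  · exact ⟨2, by show B (g ν) (g (g ν)) = ((2 : ℤ) : ℚ); simp only [B, Fin.sum_univ_four]; simp [g, μ, ν, a, CartanA4]; norm_num⟩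
  · exact ⟨0, by show B (g ν) (g (g (g ν))) = ((0 : ℤ) : ℚ); simp only [B, Fin.sum_univ_four]; simp [g, μ, ν, a, CartanA4]; norm_num⟩
  · exact absurd hpq (by decide)
  · exact absurd hpq (by decide)
  · exact absurd hpq (by decide)
  · exact absurd hpq (by decide)
  · exact absurd hpq (by decide)
  · exact absurd hpq (by decide)
  · exact ⟨-4, by show B (g (g ν)) (g (g ν)) = ((-4 : ℤ) : ℚ); simp only [B, Fin.sum_univ_four]; simp [g, μ, ν, a, CartanA4]; norm_num⟩
  · exact ⟨2, by show B (g (g ν)) (g (g (g ν))) = ((2 : ℤ) : ℚ); simp only [B, Fin.sum_univ_four]; simp [g, μ, ν, a, CartanA4]; norm_num⟩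
  · exact absurd hpq (by decide)
  · exact absurd hpq (by decide)
  · exact absurd hpq (by decide)
  · exact absurd hpq (by decide)
  · exact absurd hpq (by decide)
  · exact absurd hpq (by decide)
  · exact absurd hpq (by decide)
  · exact ⟨-4, by show B (g (g (g ν))) (g (g (g ν))) = ((-4 : ℤ) : ℚ); simp only [B, Fin.sum_univ_four]; simp [g, μ, ν, a, CartanA4]; norm_num⟩

lemma tbl (p q : Fin 8) : ∃ n : ℤ, B (W p) (W q) = (n : ℚ) := by
  rcases le_total p q with h | h
  · exact tblhalf p q h
  · obtain ⟨n, hn⟩ := tblhalf q p h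
    exact ⟨n, by rw [B_comm]; exact hn⟩

set_option maxHeartbeats 4000000 in
lemma hdiag : ∀ p : Fin 8, B (W p) (W p) = -4 := by
  intro p
  fin_cases p
  · show B (μ) (μ) = -4; simp only [B, Fin.sum_univ_four]; simp [g, μ, ν, a, CartanA4]; norm_num
  · show B (g μ) (g μ) = -4; simp only [B, Fin.sum_univ_four]; simp [g, μ, ν, a, CartanA4]; norm_num
  · show B (g (g μ)) (g (g μ)) = -4; simp only [B, Fin.sum_univ_four]; simp [g, μ, ν, a, CartanA4]; norm_num
  · show B (g (g (g μ))) (g (g (g μ))) = -4; simp only [B, Fin.sum_univ_four]; simp [g, μ, ν, a, CartanA4]; norm_num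
  · show B (ν) (ν) = -4; simp only [B, Fin.sum_univ_four]; simp [g, μ, ν, a, CartanA4]; norm_num
  · show B (g ν) (g ν) = -4; simp only [B, Fin.sum_univ_four]; simp [g, μ, ν, a, CartanA4]; norm_num
  · show B (g (g ν)) (g (g ν)) = -4; simp only [B, Fin.sum_univ_four]; simp [g, μ, ν, a, CartanA4]; norm_num
  · show B (g (g (g ν))) (g (g (g ν))) = -4; simp only [B, Fin.sum_univ_four]; simp [g, μ, ν, a, CartanA4]; norm_num

lemma lemC2 : ∀ x ∈ AddSubgroup.closure Sg, ∀ y ∈ AddSubgroup.closure Sg,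
    ∃ n : ℤ, B x y = (n : ℚ) := by
  intro x hx y hy
  refine AddSubgroup.closure_induction₂
    (p := fun x y _ _ => ∃ n : ℤ, B x y = (n : ℚ)) ?_ ?_ ?_ ?_ ?_ ?_ ?_ hx hy
  · intro u v hu hv
    obtain ⟨p, rfl⟩ := hSW u hu
    obtain ⟨q, rfl⟩ := hSW v hv
    exact tbl p q
  · intro v _
    exact ⟨0, by rw [B_zero_left]; norm_num⟩
  · intro v _
    exact ⟨0, by rw [B_zero_right]; norm_num⟩
  · intro u v w _ _ _ h1 h2
    obtain ⟨n, hn⟩ := h1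
    obtain ⟨m, hm⟩ := h2
    exact ⟨n + m, by rw [B_add_left, hn, hm]; push_cast; ring⟩
  · intro u v w _ _ _ h1 h2
    obtain ⟨n, hn⟩ := h1
    obtain ⟨m, hm⟩ := h2
    exact ⟨n + m, by rw [B_add_right, hn, hm]; push_cast; ring⟩
  · intro u v _ _ h1
    obtain ⟨n, hn⟩ := h1
    exact ⟨-n, by rw [B_neg_left, hn]; push_cast; ring⟩
  · intro u v _ _ h1
    obtain ⟨n, hn⟩ := h1
    exact ⟨-n, by rw [B_neg_right, hn]; push_cast; ring⟩

lemma lemCdiag : ∀ y ∈ AddSubgroup.closure Sg, ∃ n : ℤ, B y y = 2 * (n : ℚ) := by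
  intro y hy
  refine AddSubgroup.closure_induction
    (p := fun y _ => ∃ n : ℤ, B y y = 2 * (n : ℚ)) ?_ ?_ ?_ ?_ hy
  · intro u hu
    obtain ⟨p, rfl⟩ := hSW u hu
    exact ⟨-2, by rw [hdiag]; norm_num⟩
  · exact ⟨0, by rw [B_zero_left]; norm_num⟩
  · intro u v hu hv h1 h2
    obtain ⟨n, hn⟩ := h1
    obtain ⟨m, hm⟩ := h2
    obtain ⟨k, hk⟩ := lemC2 u hu v hv
    refine ⟨n + k + m, ?_⟩
    rw [B_add_left, B_add_right, B_add_right, hn, hm, hk, B_comm v u, hk]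
    push_cast; ring
  · intro u _ h1
    obtain ⟨n, hn⟩ := h1
    exact ⟨n, by rw [B_neg_left, B_neg_right, hn]; push_cast; ring⟩

lemma sum_basis (v : V) : v = ∑ j : Fin 4, ∑ i : Fin 4, v j i • a j i := by
  funext j i
  simp only [Finset.sum_apply, Pi.smul_apply, smul_eq_mul, a]
  fin_cases j <;> fin_cases i <;>
    simp [Fin.sum_univ_four, Fin.ext_iff, lemv3]

/-- `L` is an even integral lattice of rank 16 containing `N`. -/
theorem stmt1 :
    (∀ x ∈ L, ∀ y ∈ L, ∃ n : ℤ, B x y = (n : ℚ)) ∧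
    (∀ x ∈ L, ∃ n : ℤ, B x x = 2 * (n : ℚ)) ∧
    (N : Set V) ⊆ (L : Set V) ∧
    Submodule.span ℚ (L : Set V) = ⊤ := by
  have hdecomp : ∀ x ∈ L, ∃ xn ∈ N, ∃ xc ∈ AddSubgroup.closure Sg, xn + xc = x := by
    intro x hx
    rw [L_eq] at hx
    exact AddSubgroup.mem_sup.mp hx
  refine ⟨?_, ?_, ?_, ?_⟩
  · intro x hx y hy
    obtain ⟨xn, hxn, xc, hxc, rfl⟩ := hdecomp x hx
    obtain ⟨yn, hyn, yc, hyc, rfl⟩ := hdecomp y hy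
    obtain ⟨n1, h1⟩ := lemNN xn hxn yn hyn
    obtain ⟨n2, h2⟩ := lemNC xn hxn yc hyc
    obtain ⟨n3, h3⟩ := lemNC yn hyn xc hxc
    obtain ⟨n4, h4⟩ := lemC2 xc hxc yc hyc
    refine ⟨2 * n1 + n2 + n3 + n4, ?_⟩
    rw [B_add_left, B_add_right, B_add_right, h1, h2, h4, B_comm xc yn, h3]
    push_cast; ring
  · intro x hx
    obtain ⟨xn, hxn, xc, hxc, rfl⟩ := hdecomp x hx
    obtain ⟨n1, h1⟩ := lemNN xn hxn xn hxn
    obtain ⟨n2, h2⟩ := lemNC xn hxn xc hxc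
    obtain ⟨n3, h3⟩ := lemCdiag xc hxc
    refine ⟨n1 + n2 + n3, ?_⟩
    rw [B_add_left, B_add_right, B_add_right, h1, h2, h3, B_comm xc xn, h2]
    push_cast; ring
  · intro x hx
    show x ∈ L
    rw [L_eq]
    exact AddSubgroup.mem_sup_left hx
  · rw [eq_top_iff]
    intro v _
    have haL : ∀ j i : Fin 4, a j i ∈ (L : Set V) := by
      intro j i
      show a j i ∈ L
      rw [L_eq]
      exact AddSubgroup.mem_sup_left (aN j i)
    rw [sum_basis v]
    exact Submodule.sum_mem _ fun j _ => Submodule.sum_mem _ fun i _ =>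
      Submodule.smul_mem _ _ (Submodule.subset_span (haL j i))
end
end

section
/- The subgroup N has index exactly 2⁸ = 256 in L, i.e. the quotient group L/N is finite of order 256. -/
noncomputable section

namespace Stmt2Aux

def E0 : V := ![![1/2,0,0,0],![1/2,0,0,0],![1/2,0,0,0],![1/2,0,0,0]]
def E1 : V := ![![0,1/2,0,0],![0,1/2,0,0],![0,1/2,0,0],![0,1/2,0,0]]
def E2 : V := ![![0,0,1/2,0],![0,0,1/2,0],![0,0,1/2,0],![0,0,1/2,0]]
def E3 : V := ![![0,0,0,1/2],![0,0,0,1/2],![0,0,0,1/2],![0,0,0,1/2]]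
def E4 : V := ![![0,0,0,0],![1/2,0,0,0],![0,0,1/2,1/2],![1/2,0,1/2,1/2]]
def E5 : V := ![![0,0,0,0],![0,1/2,0,0],![-1/2,-1/2,-1/2,0],![-1/2,0,-1/2,0]]
def E6 : V := ![![0,0,0,0],![0,0,1/2,0],![0,-1/2,-1/2,-1/2],![0,-1/2,0,-1/2]]
def E7 : V := ![![0,0,0,0],![0,0,0,1/2],![1/2,1/2,0,0],![1/2,1/2,0,1/2]]
def EE : Fin 8 → V := ![E0, E1, E2, E3, E4, E5, E6, E7]

def M0 : Fin 4 → Fin 4 → ℤ := ![![1,0,0,0],![1,0,0,0],![1,0,0,0],![1,0,0,0]]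
def M1 : Fin 4 → Fin 4 → ℤ := ![![0,1,0,0],![0,1,0,0],![0,1,0,0],![0,1,0,0]]
def M2 : Fin 4 → Fin 4 → ℤ := ![![0,0,1,0],![0,0,1,0],![0,0,1,0],![0,0,1,0]]
def M3 : Fin 4 → Fin 4 → ℤ := ![![0,0,0,1],![0,0,0,1],![0,0,0,1],![0,0,0,1]]
def M4 : Fin 4 → Fin 4 → ℤ := ![![0,0,0,0],![1,0,0,0],![0,0,1,1],![1,0,1,1]]
def M5 : Fin 4 → Fin 4 → ℤ := ![![0,0,0,0],![0,1,0,0],![-1,-1,-1,0],![-1,0,-1,0]]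
def M6 : Fin 4 → Fin 4 → ℤ := ![![0,0,0,0],![0,0,1,0],![0,-1,-1,-1],![0,-1,0,-1]]
def M7 : Fin 4 → Fin 4 → ℤ := ![![0,0,0,0],![0,0,0,1],![1,1,0,0],![1,1,0,1]]
def MM : Fin 8 → Fin 4 → Fin 4 → ℤ := ![M0, M1, M2, M3, M4, M5, M6, M7]

def genV : Fin 8 → V :=
  ![μ, g μ, g (g μ), g (g (g μ)), ν, g ν, g (g ν), g (g (g ν))]

def v8 : Fin 8 → (Fin 4 → Fin 4 → ZMod 2) := fun k j i => ((MM k j i : ℤ) : ZMod 2)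

def Sset : Set V := {x : V | ∃ i : Fin 4, x = g^[(i : ℕ)] μ ∨ x = g^[(i : ℕ)] ν}

lemma mu_eq : μ = E0 := by
  funext j i; fin_cases j <;> fin_cases i <;>
    norm_num [μ, a, E0, Fin.ext_iff, Matrix.vecHead, Matrix.vecTail,
      show ((3:Fin 4):ℕ) = 3 from rfl, show ((2:Fin 4):ℕ) = 2 from rfl,
      show ((1:Fin 4):ℕ) = 1 from rfl]

lemma nu_eq : ν = E4 := by
  funext j i; fin_cases j <;> fin_cases i <;>
    norm_num [ν, a, E4, Fin.ext_iff, Matrix.vecHead, Matrix.vecTail,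
      show ((3:Fin 4):ℕ) = 3 from rfl, show ((2:Fin 4):ℕ) = 2 from rfl,
      show ((1:Fin 4):ℕ) = 1 from rfl]

lemma gE0 : g E0 = E1 := by
  funext j i; fin_cases j <;> fin_cases i <;>
    norm_num [g, E0, E1, Matrix.vecHead, Matrix.vecTail, Matrix.cons_val_three, Matrix.cons_val_two]
lemma gE1 : g E1 = E2 := by
  funext j i; fin_cases j <;> fin_cases i <;>
    norm_num [g, E1, E2, Matrix.vecHead, Matrix.vecTail, Matrix.cons_val_three, Matrix.cons_val_two]
lemma gE2 : g E2 = E3 := by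
  funext j i; fin_cases j <;> fin_cases i <;>
    norm_num [g, E2, E3, Matrix.vecHead, Matrix.vecTail, Matrix.cons_val_three, Matrix.cons_val_two]
lemma gE4 : g E4 = E5 := by
  funext j i; fin_cases j <;> fin_cases i <;>
    norm_num [g, E4, E5, Matrix.vecHead, Matrix.vecTail, Matrix.cons_val_three, Matrix.cons_val_two]
lemma gE5 : g E5 = E6 := by
  funext j i; fin_cases j <;> fin_cases i <;>
    norm_num [g, E5, E6, Matrix.vecHead, Matrix.vecTail, Matrix.cons_val_three, Matrix.cons_val_two]
lemma gE6 : g E6 = E7 := by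
  funext j i; fin_cases j <;> fin_cases i <;>
    norm_num [g, E6, E7, Matrix.vecHead, Matrix.vecTail, Matrix.cons_val_three, Matrix.cons_val_two]

lemma genV_eq (k : Fin 8) : genV k = EE k := by
  fin_cases k
  · exact mu_eq
  · show g μ = E1; rw [mu_eq, gE0]
  · show g (g μ) = E2; rw [mu_eq, gE0, gE1]
  · show g (g (g μ)) = E3; rw [mu_eq, gE0, gE1, gE2]
  · exact nu_eq
  · show g ν = E5; rw [nu_eq, gE4]
  · show g (g ν) = E6; rw [nu_eq, gE4, gE5]
  · show g (g (g ν)) = E7; rw [nu_eq, gE4, gE5, gE6]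

lemma spec0 (j i : Fin 4) : 2 * E0 j i = ((M0 j i : ℤ) : ℚ) := by
  fin_cases j <;> fin_cases i <;> norm_num [E0, M0, Matrix.vecHead, Matrix.vecTail]
lemma spec1 (j i : Fin 4) : 2 * E1 j i = ((M1 j i : ℤ) : ℚ) := by
  fin_cases j <;> fin_cases i <;> norm_num [E1, M1, Matrix.vecHead, Matrix.vecTail]
lemma spec2 (j i : Fin 4) : 2 * E2 j i = ((M2 j i : ℤ) : ℚ) := by
  fin_cases j <;> fin_cases i <;> norm_num [E2, M2, Matrix.vecHead, Matrix.vecTail]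
lemma spec3 (j i : Fin 4) : 2 * E3 j i = ((M3 j i : ℤ) : ℚ) := by
  fin_cases j <;> fin_cases i <;> norm_num [E3, M3, Matrix.vecHead, Matrix.vecTail]
lemma spec4 (j i : Fin 4) : 2 * E4 j i = ((M4 j i : ℤ) : ℚ) := by
  fin_cases j <;> fin_cases i <;> norm_num [E4, M4, Matrix.vecHead, Matrix.vecTail]
lemma spec5 (j i : Fin 4) : 2 * E5 j i = ((M5 j i : ℤ) : ℚ) := by
  fin_cases j <;> fin_cases i <;> norm_num [E5, M5, Matrix.vecHead, Matrix.vecTail]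
lemma spec6 (j i : Fin 4) : 2 * E6 j i = ((M6 j i : ℤ) : ℚ) := by
  fin_cases j <;> fin_cases i <;> norm_num [E6, M6, Matrix.vecHead, Matrix.vecTail]
lemma spec7 (j i : Fin 4) : 2 * E7 j i = ((M7 j i : ℤ) : ℚ) := by
  fin_cases j <;> fin_cases i <;> norm_num [E7, M7, Matrix.vecHead, Matrix.vecTail]

lemma genV_spec (k : Fin 8) (j i : Fin 4) : 2 * genV k j i = ((MM k j i : ℤ) : ℚ) := by
  rw [genV_eq]
  fin_cases k
  exacts [spec0 j i, spec1 j i, spec2 j i, spec3 j i, spec4 j i, spec5 j i, spec6 j i,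
    spec7 j i]

lemma genV_mem (k : Fin 8) : genV k ∈ Sset := by
  fin_cases k
  · exact ⟨0, Or.inl rfl⟩
  · exact ⟨1, Or.inl rfl⟩
  · exact ⟨2, Or.inl rfl⟩
  · exact ⟨3, Or.inl rfl⟩
  · exact ⟨0, Or.inr rfl⟩
  · exact ⟨1, Or.inr rfl⟩
  · exact ⟨2, Or.inr rfl⟩
  · exact ⟨3, Or.inr rfl⟩


lemma mem_N_iff {x : V} : x ∈ N ↔ ∀ j i, ∃ n : ℤ, (n : ℚ) = x j i := by
  simp [N, AddSubgroup.mem_pi, AddMonoidHom.mem_range, Int.coe_castAddHom,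
    AddSubgroup.mem_zmultiples_iff, zsmul_eq_mul, mul_one]

def HI (x : V) : Prop := ∀ j i : Fin 4, ∃ n : ℤ, (n : ℚ) = 2 * x j i

def Dfun (x : V) : Fin 4 → Fin 4 → ZMod 2 := fun j i => ((2 * x j i).num : ZMod 2)

lemma HI_N {x : V} (hx : x ∈ N) : HI x := by
  intro j i
  obtain ⟨n, hn⟩ := mem_N_iff.mp hx j i
  exact ⟨2 * n, by push_cast; rw [hn]⟩

lemma HI_zero : HI 0 := fun j i => ⟨0, by simp⟩

lemma HI_add {x y : V} (hx : HI x) (hy : HI y) : HI (x + y) := by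
  intro j i
  obtain ⟨n, hn⟩ := hx j i
  obtain ⟨m, hm⟩ := hy j i
  refine ⟨n + m, ?_⟩
  have : (x + y) j i = x j i + y j i := rfl
  rw [this]; push_cast; rw [hn, hm]; ring

lemma HI_neg {x : V} (hx : HI x) : HI (-x) := by
  intro j i
  obtain ⟨n, hn⟩ := hx j i
  refine ⟨-n, ?_⟩
  have : (-x) j i = -(x j i) := rfl
  rw [this]; push_cast; rw [hn]; ring

lemma Dfun_zero : Dfun 0 = 0 := by
  funext j i
  show (((2 : ℚ) * (0 : V) j i).num : ZMod 2) = 0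
  norm_num

lemma Dfun_add {x y : V} (hx : HI x) (hy : HI y) :
    Dfun (x + y) = Dfun x + Dfun y := by
  funext j i
  obtain ⟨n, hn⟩ := hx j i
  obtain ⟨m, hm⟩ := hy j i
  have h3 : 2 * (x + y) j i = ((n + m : ℤ) : ℚ) := by
    have : (x + y) j i = x j i + y j i := rfl
    rw [this]; push_cast; rw [hn, hm]; ring
  show ((2 * (x + y) j i).num : ZMod 2)
      = ((2 * x j i).num : ZMod 2) + ((2 * y j i).num : ZMod 2)
  rw [h3, ← hn, ← hm, Rat.num_intCast, Rat.num_intCast, Rat.num_intCast]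
  push_cast; ring

lemma Dfun_neg {x : V} : Dfun (-x) = -Dfun x := by
  funext j i
  show ((2 * (-x) j i).num : ZMod 2) = -((2 * x j i).num : ZMod 2)
  have h : 2 * (-x) j i = -(2 * x j i) := by
    have : (-x) j i = -(x j i) := rfl
    rw [this]; ring
  rw [h, Rat.neg_num]
  push_cast; ring

lemma Dfun_N {x : V} (hx : x ∈ N) : Dfun x = 0 := by
  funext j i
  obtain ⟨n, hn⟩ := mem_N_iff.mp hx j i
  show ((2 * x j i).num : ZMod 2) = 0
  have h : 2 * x j i = ((2 * n : ℤ) : ℚ) := by push_cast; rw [hn]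
  rw [h, Rat.num_intCast, ZMod.intCast_zmod_eq_zero_iff_dvd]
  exact ⟨n, by push_cast; ring⟩

def T8 : (Fin 8 → ZMod 2) →+ (Fin 4 → Fin 4 → ZMod 2) where
  toFun c := ∑ k, c k • v8 k
  map_zero' := by simp
  map_add' c d := by
    simp only [Pi.add_apply, add_smul]
    rw [Finset.sum_add_distrib]

lemma Dfun_of_spec {x : V} {M : Fin 4 → Fin 4 → ℤ}
    (h : ∀ j i, 2 * x j i = ((M j i : ℤ) : ℚ)) :
    Dfun x = fun j i => ((M j i : ℤ) : ZMod 2) := by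
  funext j i
  show ((2 * x j i).num : ZMod 2) = _
  rw [h j i, Rat.num_intCast]

lemma Dfun_genV (k : Fin 8) : Dfun (genV k) = v8 k :=
  Dfun_of_spec (genV_spec k)

lemma T8_apply (c : Fin 8 → ZMod 2) : T8 c = ∑ k, c k • v8 k := rfl

lemma T8_single (k : Fin 8) : T8 (Pi.single k 1) = v8 k := by
  rw [T8_apply, Finset.sum_eq_single k]
  · simp
  · intro b _ hb; simp [Pi.single_apply, hb.symm]
  · simp

set_option maxRecDepth 40000 in
set_option maxHeartbeats 4000000 in
lemma T8_inj : Function.Injective T8 := by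
  rw [injective_iff_map_eq_zero]
  show ∀ c : Fin 8 → ZMod 2, (∑ k, c k • v8 k) = 0 → c = 0
  decide

lemma key : ∀ x ∈ L, HI x ∧ Dfun x ∈ T8.range := by
  intro x hx
  have hx' : x ∈ N ⊔ AddSubgroup.closure Sset := hx
  obtain ⟨y, hy, z, hz, rfl⟩ := AddSubgroup.mem_sup.mp hx'
  have hzP : HI z ∧ Dfun z ∈ T8.range := by
    refine AddSubgroup.closure_induction
      (p := fun w _ => HI w ∧ Dfun w ∈ T8.range) ?_ ?_ ?_ ?_ hz
    · intro w hw
      have hk : ∃ k, w = genV k := by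
        obtain ⟨i, h | h⟩ := hw
        · fin_cases i
          exacts [⟨0, h⟩, ⟨1, h⟩, ⟨2, h⟩, ⟨3, h⟩]
        · fin_cases i
          exacts [⟨4, h⟩, ⟨5, h⟩, ⟨6, h⟩, ⟨7, h⟩]
      obtain ⟨k, rfl⟩ := hk
      refine ⟨fun j i => ⟨MM k j i, (genV_spec k j i).symm⟩, ?_⟩
      exact ⟨Pi.single k 1, by rw [T8_single, Dfun_genV]⟩
    · exact ⟨HI_zero, by rw [Dfun_zero]; exact zero_mem _⟩
    · rintro p q hp hq ⟨hp1, hp2⟩ ⟨hq1, hq2⟩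
      exact ⟨HI_add hp1 hq1, by rw [Dfun_add hp1 hq1]; exact add_mem hp2 hq2⟩
    · rintro p hp ⟨hp1, hp2⟩
      exact ⟨HI_neg hp1, by rw [Dfun_neg]; exact neg_mem hp2⟩
  refine ⟨HI_add (HI_N hy) hzP.1, ?_⟩
  rw [Dfun_add (HI_N hy) hzP.1, Dfun_N hy, zero_add]
  exact hzP.2

def DL : L →+ (Fin 4 → Fin 4 → ZMod 2) where
  toFun x := Dfun x.1
  map_zero' := Dfun_zero
  map_add' x y := Dfun_add (key x.1 x.2).1 (key y.1 y.2).1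

lemma DL_apply (x : L) : DL x = Dfun x.1 := rfl

lemma DL_ker : DL.ker = N.addSubgroupOf L := by
  ext ⟨x, hx⟩
  simp only [AddMonoidHom.mem_ker, AddSubgroup.mem_addSubgroupOf, DL_apply]
  constructor
  · intro h0
    rw [mem_N_iff]
    intro j i
    obtain ⟨n, hn⟩ := (key x hx).1 j i
    have h1 : ((2 * x j i).num : ZMod 2) = 0 := congrFun (congrFun h0 j) i
    rw [← hn, Rat.num_intCast] at h1
    obtain ⟨m, hm⟩ := (ZMod.intCast_zmod_eq_zero_iff_dvd n 2).mp h1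
    refine ⟨m, ?_⟩
    have h2 : (2 : ℚ) * x j i = 2 * (m : ℚ) := by
      rw [← hn, hm]; push_cast; ring
    linarith
  · intro hN
    exact Dfun_N hN

lemma DL_range : DL.range = T8.range := by
  apply le_antisymm
  · rintro y ⟨⟨x, hx⟩, rfl⟩
    exact (key x hx).2
  · rintro y ⟨c, rfl⟩
    rw [T8_apply]
    refine AddSubgroup.sum_mem _ fun k _ => ?_
    have hmem : genV k ∈ L :=
      SetLike.le_def.mp le_sup_right (AddSubgroup.subset_closure (genV_mem k))
    have hv : v8 k ∈ DL.range := ⟨⟨genV k, hmem⟩, Dfun_genV k⟩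
    rcases (show ∀ t : ZMod 2, t = 0 ∨ t = 1 by decide) (c k) with h | h <;> rw [h]
    · rw [zero_smul]; exact zero_mem _
    · rw [one_smul]; exact hv

end Stmt2Aux

open Stmt2Aux

/-- `N` has index exactly `2⁸ = 256` in `L`. -/
theorem stmt2 :
    N ≤ L ∧ Nat.card (L ⧸ N.addSubgroupOf L) = 256 := by
  refine ⟨le_sup_left, ?_⟩
  have e1 : (L ⧸ N.addSubgroupOf L) ≃+ DL.range := by
    rw [← DL_ker]
    exact QuotientAddGroup.quotientKerEquivRange DL
  rw [Nat.card_congr e1.toEquiv, DL_range]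
  have e2 : Nat.card T8.range = Nat.card (Set.range T8) :=
    Nat.card_congr (Equiv.setCongr (AddMonoidHom.coe_range T8))
  rw [e2, Nat.card_range_of_injective T8_inj]
  simp only [Nat.card_eq_fintype_card, Fintype.card_fun, Fintype.card_fin]
  rw [show Fintype.card (ZMod 2) = 2 from rfl]
  norm_num

end
end

section
/- Every nonzero vector x ∈ L satisfies B(x, x) ≤ −4; in particular L contains no vector of length −2 (L is rootless). -/
noncomputable section

/- ------------------------------------------------------------------ -/
/- Auxiliary material for the proof of `stmt3`.                        -/
/- ------------------------------------------------------------------ -/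


/-- Twice the eight glue vectors `μ, gμ, g²μ, g³μ, ν, gν, g²ν, g³ν`, as integer tables. -/
def Mg : Fin 8 → Fin 4 → Fin 4 → ℤ :=
  ![![![1,0,0,0],![1,0,0,0],![1,0,0,0],![1,0,0,0]],
    ![![0,1,0,0],![0,1,0,0],![0,1,0,0],![0,1,0,0]],
    ![![0,0,1,0],![0,0,1,0],![0,0,1,0],![0,0,1,0]],
    ![![0,0,0,1],![0,0,0,1],![0,0,0,1],![0,0,0,1]],
    ![![0,0,0,0],![1,0,0,0],![0,0,1,1],![1,0,1,1]],
    ![![0,0,0,0],![0,1,0,0],![-1,-1,-1,0],![-1,0,-1,0]],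
    ![![0,0,0,0],![0,0,1,0],![0,-1,-1,-1],![0,-1,0,-1]],
    ![![0,0,0,0],![0,0,0,1],![1,1,0,0],![1,1,0,1]]]

/-- The mod-2 glue code word attached to coefficients `ε`. -/
def cw (ε : Fin 8 → ZMod 2) (j k : Fin 4) : ZMod 2 := ∑ t, ε t * (Mg t j k : ZMod 2)

/-- The parity pattern of the `A₄`-coordinates `(c₁, c₂-c₁, c₃-c₂, c₄-c₃, c₄)`. -/
def pat (c : Fin 4 → ZMod 2) : Fin 5 → ZMod 2 := ![c 0, c 1 - c 0, c 2 - c 1, c 3 - c 2, c 3]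

set_option maxRecDepth 100000 in
set_option maxHeartbeats 4000000 in
lemma keyDecide : ∀ ε : Fin 8 → ZMod 2,
    (∀ j k, cw ε j k = 0) ∨
    (8 : ℤ) ≤ ∑ j : Fin 4, ∑ l : Fin 5, (if pat (cw ε j) l = 1 then 1 else 0) := by decide

set_option maxRecDepth 100000 in
set_option maxHeartbeats 1000000 in
lemma indParity : ∀ (t : Fin 8) (j k : Fin 4),
    ((Mg t j k : ℤ) : ZMod 2) = cw (fun s => if s = t then 1 else 0) j k := by decide

/-- The rational vectors `gⁱμ, gⁱν`, i.e. half of the tables `Mg`. -/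
def val (t : Fin 8) : V := fun j k => (Mg t j k : ℚ)/2

lemma hMg0 : Mg 0 = ![![1,0,0,0],![1,0,0,0],![1,0,0,0],![1,0,0,0]] := by decide
lemma hMg1 : Mg 1 = ![![0,1,0,0],![0,1,0,0],![0,1,0,0],![0,1,0,0]] := by decide
lemma hMg2 : Mg 2 = ![![0,0,1,0],![0,0,1,0],![0,0,1,0],![0,0,1,0]] := by decide
lemma hMg3 : Mg 3 = ![![0,0,0,1],![0,0,0,1],![0,0,0,1],![0,0,0,1]] := by decide
lemma hMg4 : Mg 4 = ![![0,0,0,0],![1,0,0,0],![0,0,1,1],![1,0,1,1]] := by decide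
lemma hMg5 : Mg 5 = ![![0,0,0,0],![0,1,0,0],![-1,-1,-1,0],![-1,0,-1,0]] := by decide
lemma hMg6 : Mg 6 = ![![0,0,0,0],![0,0,1,0],![0,-1,-1,-1],![0,-1,0,-1]] := by decide
lemma hMg7 : Mg 7 = ![![0,0,0,0],![0,0,0,1],![1,1,0,0],![1,1,0,1]] := by decide

lemma hval0 : μ = val 0 := by
  funext j k
  fin_cases j <;> fin_cases k <;>
    norm_num [μ, a, val, hMg0, Fin.ext_iff, Matrix.vecHead, Matrix.vecTail,
      show ((3:Fin 4):ℕ) = 3 from rfl, show ((2:Fin 4):ℕ) = 2 from rfl]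

lemma hval4 : ν = val 4 := by
  funext j k
  fin_cases j <;> fin_cases k <;>
    norm_num [ν, a, val, hMg4, Fin.ext_iff, Matrix.vecHead, Matrix.vecTail,
      show ((3:Fin 4):ℕ) = 3 from rfl, show ((2:Fin 4):ℕ) = 2 from rfl]

lemma hval1 : g (val 0) = val 1 := by
  funext j k
  fin_cases j <;> fin_cases k <;>
    norm_num [g, val, hMg0, hMg1, Fin.ext_iff, Matrix.vecHead, Matrix.vecTail, Matrix.cons_val_three, Matrix.cons_val_two]

lemma hval2 : g (val 1) = val 2 := by
  funext j k
  fin_cases j <;> fin_cases k <;>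
    norm_num [g, val, hMg1, hMg2, Fin.ext_iff, Matrix.vecHead, Matrix.vecTail, Matrix.cons_val_three, Matrix.cons_val_two]

lemma hval3 : g (val 2) = val 3 := by
  funext j k
  fin_cases j <;> fin_cases k <;>
    norm_num [g, val, hMg2, hMg3, Fin.ext_iff, Matrix.vecHead, Matrix.vecTail, Matrix.cons_val_three, Matrix.cons_val_two]

lemma hval5 : g (val 4) = val 5 := by
  funext j k
  fin_cases j <;> fin_cases k <;>
    norm_num [g, val, hMg4, hMg5, Fin.ext_iff, Matrix.vecHead, Matrix.vecTail, Matrix.cons_val_three, Matrix.cons_val_two]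

lemma hval6 : g (val 5) = val 6 := by
  funext j k
  fin_cases j <;> fin_cases k <;>
    norm_num [g, val, hMg5, hMg6, Fin.ext_iff, Matrix.vecHead, Matrix.vecTail, Matrix.cons_val_three, Matrix.cons_val_two]

lemma hval7 : g (val 6) = val 7 := by
  funext j k
  fin_cases j <;> fin_cases k <;>
    norm_num [g, val, hMg6, hMg7, Fin.ext_iff, Matrix.vecHead, Matrix.vecTail, Matrix.cons_val_three, Matrix.cons_val_two]

/-- The enveloping subgroup: vectors of the form `m/2`, `m` integral with parity in the code. -/
def SB : AddSubgroup V where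
  carrier := {x | ∃ ε : Fin 8 → ZMod 2, ∃ m : Fin 4 → Fin 4 → ℤ,
      (∀ j k, x j k = (m j k : ℚ)/2) ∧ (∀ j k, ((m j k : ℤ) : ZMod 2) = cw ε j k)}
  zero_mem' := ⟨0, 0, by simp, by simp [cw]⟩
  add_mem' := by
    rintro x y ⟨ε, m, hx, hm⟩ ⟨δ, n, hy, hn⟩
    refine ⟨ε + δ, m + n, fun j k => ?_, fun j k => ?_⟩
    · show x j k + y j k = ((m j k + n j k : ℤ) : ℚ)/2
      rw [hx j k, hy j k]; push_cast; ring
    · show ((m j k + n j k : ℤ) : ZMod 2) = _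
      push_cast
      rw [hm j k, hn j k]
      simp [cw, add_mul, Finset.sum_add_distrib]
  neg_mem' := by
    rintro x ⟨ε, m, hx, hm⟩
    refine ⟨-ε, -m, fun j k => ?_, fun j k => ?_⟩
    · show -(x j k) = ((-(m j k) : ℤ) : ℚ)/2
      rw [hx j k]; push_cast; ring
    · show ((-(m j k) : ℤ) : ZMod 2) = _
      push_cast
      rw [hm j k]
      simp [cw, neg_mul, Finset.sum_neg_distrib]

lemma hNS : N ≤ SB := by
  intro x hx
  rw [N, AddSubgroup.mem_pi] at hx
  have hx' : ∀ j k, ∃ n : ℤ, (n : ℚ) = x j k := by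
    intro j k
    have := hx j (Set.mem_univ j)
    rw [AddSubgroup.mem_pi] at this
    exact this k (Set.mem_univ k)
  choose n hn using hx'
  refine ⟨0, fun j k => 2 * n j k, fun j k => ?_, fun j k => ?_⟩
  · rw [← hn j k]; push_cast; ring
  · show ((2 * n j k : ℤ) : ZMod 2) = cw 0 j k
    have h2 : ((2 * n j k : ℤ) : ZMod 2) = 0 := by
      push_cast
      rw [show (2 : ZMod 2) = 0 from rfl]
      ring
    rw [h2]
    simp [cw]

lemma hGen : ∀ t : Fin 8, val t ∈ SB :=
  fun t => ⟨fun s => if s = t then 1 else 0, Mg t, fun _ _ => rfl, fun j k => indParity t j k⟩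

lemma hLS : L ≤ SB := by
  rw [L]
  apply sup_le hNS
  rw [AddSubgroup.closure_le]
  rintro x ⟨i, hi | hi⟩ <;> fin_cases i <;> subst hi
  · exact hval0 ▸ hGen 0
  · show g^[1] μ ∈ SB
    rw [show g^[1] μ = g μ from rfl, hval0, hval1]; exact hGen 1
  · show g^[2] μ ∈ SB
    rw [show g^[2] μ = g (g μ) from rfl, hval0, hval1, hval2]; exact hGen 2
  · show g^[3] μ ∈ SB
    rw [show g^[3] μ = g (g (g μ)) from rfl, hval0, hval1, hval2, hval3]; exact hGen 3
  · exact hval4 ▸ hGen 4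
  · show g^[1] ν ∈ SB
    rw [show g^[1] ν = g ν from rfl, hval4, hval5]; exact hGen 5
  · show g^[2] ν ∈ SB
    rw [show g^[2] ν = g (g ν) from rfl, hval4, hval5, hval6]; exact hGen 6
  · show g^[3] ν ∈ SB
    rw [show g^[3] ν = g (g (g ν)) from rfl, hval4, hval5, hval6, hval7]; exact hGen 7

lemma Bquad (x : V) : B x x = -2 * ∑ j : Fin 4,
    ((x j 0)^2 + (x j 1 - x j 0)^2 + (x j 2 - x j 1)^2 + (x j 3 - x j 2)^2 + (x j 3)^2) := by
  have key : ∀ j : Fin 4, (∑ i : Fin 4, ∑ k : Fin 4, x j i * (CartanA4 i k : ℚ) * x j k)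
      = ((x j 0)^2 + (x j 1 - x j 0)^2 + (x j 2 - x j 1)^2 + (x j 3 - x j 2)^2 + (x j 3)^2) := by
    intro j
    norm_num +decide [Fin.sum_univ_four, CartanA4, Matrix.of_apply]
    ring
  unfold B
  rw [Finset.sum_congr rfl fun j _ => key j]

lemma copy_bound (ε : Fin 8 → ZMod 2) (j : Fin 4) (b : Fin 4 → ℤ)
    (hb : ∀ k, ((b k : ℤ) : ZMod 2) = cw ε j k) :
    (∑ l : Fin 5, if pat (cw ε j) l = 1 then (1:ℤ) else 0) ≤
      (b 0)^2 + (b 1 - b 0)^2 + (b 2 - b 1)^2 + (b 3 - b 2)^2 + (b 3)^2 := by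
  have key : ∀ (u : ℤ) (c : ZMod 2), ((u : ℤ) : ZMod 2) = c →
      (if c = 1 then (1:ℤ) else 0) ≤ u^2 := by
    intro u c hu
    split
    · rename_i hc
      have hu0 : u ≠ 0 := by
        intro h
        rw [h] at hu
        rw [← hu] at hc
        norm_num at hc
      have := Int.one_le_abs hu0
      nlinarith [sq_abs u]
    · positivity
  have p0 : pat (cw ε j) 0 = cw ε j 0 := rfl
  have p1 : pat (cw ε j) 1 = cw ε j 1 - cw ε j 0 := rfl
  have p2 : pat (cw ε j) 2 = cw ε j 2 - cw ε j 1 := rfl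
  have p3 : pat (cw ε j) 3 = cw ε j 3 - cw ε j 2 := rfl
  have p4 : pat (cw ε j) 4 = cw ε j 3 := rfl
  have h0 := key (b 0) _ (p0 ▸ hb 0)
  have h1 := key (b 1 - b 0) (pat (cw ε j) 1) (by rw [p1, ← hb 1, ← hb 0]; push_cast; ring)
  have h2 := key (b 2 - b 1) (pat (cw ε j) 2) (by rw [p2, ← hb 2, ← hb 1]; push_cast; ring)
  have h3 := key (b 3 - b 2) (pat (cw ε j) 3) (by rw [p3, ← hb 3, ← hb 2]; push_cast; ring)
  have h4 := key (b 3) _ (p4 ▸ hb 3)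
  rw [Fin.sum_univ_five]
  linarith

lemma mainIneq (ε : Fin 8 → ZMod 2) (m : Fin 4 → Fin 4 → ℤ)
    (hm : ∀ j k, ((m j k : ℤ) : ZMod 2) = cw ε j k) (hne : m ≠ 0) :
    (8:ℤ) ≤ ∑ j : Fin 4,
      ((m j 0)^2 + (m j 1 - m j 0)^2 + (m j 2 - m j 1)^2 + (m j 3 - m j 2)^2 + (m j 3)^2) := by
  have hnn : ∀ j' : Fin 4, (0:ℤ) ≤
      (m j' 0)^2 + (m j' 1 - m j' 0)^2 + (m j' 2 - m j' 1)^2 + (m j' 3 - m j' 2)^2 + (m j' 3)^2 := by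
    intro j'; positivity
  rcases keyDecide ε with h0 | h8
  · -- all entries of the codeword vanish: m is even, use evenness of the A₄ form
    have heven : ∀ j k, ∃ c : ℤ, m j k = 2 * c := by
      intro j k
      have h1 : ((m j k : ℤ) : ZMod 2) = 0 := by rw [hm j k, h0 j k]
      have h2 := (ZMod.intCast_zmod_eq_zero_iff_dvd (m j k) 2).mp h1
      exact ⟨h2.choose, by exact_mod_cast h2.choose_spec⟩
    choose c hc using heven
    obtain ⟨j, hj⟩ := Function.ne_iff.mp hne
    have hcj : ¬(∀ k, c j k = 0) := by
      intro hk
      apply hj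
      funext k
      rw [hc j k, hk k]
      simp
    have hq : 1 ≤ (c j 0)^2 + (c j 1)^2 + (c j 2)^2 + (c j 3)^2
        - c j 0 * c j 1 - c j 1 * c j 2 - c j 2 * c j 3 := by
      by_contra hcon
      push_neg at hcon
      have s0 : (c j 0)^2 ≤ 0 := by
        nlinarith [sq_nonneg (c j 1 - c j 0), sq_nonneg (c j 2 - c j 1),
          sq_nonneg (c j 3 - c j 2), sq_nonneg (c j 3)]
      have s1 : (c j 1 - c j 0)^2 ≤ 0 := by
        nlinarith [sq_nonneg (c j 0), sq_nonneg (c j 2 - c j 1),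
          sq_nonneg (c j 3 - c j 2), sq_nonneg (c j 3)]
      have s2 : (c j 2 - c j 1)^2 ≤ 0 := by
        nlinarith [sq_nonneg (c j 0), sq_nonneg (c j 1 - c j 0),
          sq_nonneg (c j 3 - c j 2), sq_nonneg (c j 3)]
      have s3 : (c j 3 - c j 2)^2 ≤ 0 := by
        nlinarith [sq_nonneg (c j 0), sq_nonneg (c j 1 - c j 0),
          sq_nonneg (c j 2 - c j 1), sq_nonneg (c j 3)]
      have e0 : c j 0 = 0 := by
        have := le_antisymm s0 (sq_nonneg _)
        exact (pow_eq_zero_iff two_ne_zero).mp this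
      have e1 : c j 1 = 0 := by
        have := (pow_eq_zero_iff (n := 2) two_ne_zero).mp (le_antisymm s1 (sq_nonneg _))
        linarith
      have e2 : c j 2 = 0 := by
        have := (pow_eq_zero_iff (n := 2) two_ne_zero).mp (le_antisymm s2 (sq_nonneg _))
        linarith
      have e3 : c j 3 = 0 := by
        have := (pow_eq_zero_iff (n := 2) two_ne_zero).mp (le_antisymm s3 (sq_nonneg _))
        linarith
      exact hcj (fun k => by fin_cases k <;> assumption)
    have hcopy : (8:ℤ) ≤
        (m j 0)^2 + (m j 1 - m j 0)^2 + (m j 2 - m j 1)^2 + (m j 3 - m j 2)^2 + (m j 3)^2 := by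
      rw [hc j 0, hc j 1, hc j 2, hc j 3]
      nlinarith [hq]
    have hs := Finset.single_le_sum (f := fun j' => (m j' 0)^2 + (m j' 1 - m j' 0)^2
      + (m j' 2 - m j' 1)^2 + (m j' 3 - m j' 2)^2 + (m j' 3)^2)
      (fun i _ => hnn i) (Finset.mem_univ j)
    exact le_trans hcopy (by simpa using hs)
  · -- at least eight odd entries in the combined pattern
    refine le_trans h8 (Finset.sum_le_sum fun j _ => ?_)
    exact copy_bound ε j (m j) (fun k => hm j k)


/-- Every nonzero vector of `L` has length at most `-4`; in particular `L` has no vectors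
of length `-2`. -/
theorem stmt3 :
    (∀ x ∈ L, x ≠ 0 → B x x ≤ -4) ∧ ∀ x ∈ L, B x x ≠ -2 := by
  have main1 : ∀ x ∈ L, x ≠ 0 → B x x ≤ -4 := by
    intro x hx hne
    obtain ⟨ε, m, hx1, hm⟩ := hLS hx
    have hmne : m ≠ 0 := by
      intro hm0
      apply hne
      funext j k
      rw [hx1 j k, hm0]
      simp
    have key := mainIneq ε m hm hmne
    have hEq : B x x = -(((∑ j : Fin 4, ((m j 0)^2 + (m j 1 - m j 0)^2 + (m j 2 - m j 1)^2
        + (m j 3 - m j 2)^2 + (m j 3)^2) : ℤ) : ℚ))/2 := by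
      rw [Bquad]
      simp only [Fin.sum_univ_four, hx1]
      push_cast
      ring
    rw [hEq]
    have h8 : (8:ℚ) ≤ ((∑ j : Fin 4, ((m j 0)^2 + (m j 1 - m j 0)^2 + (m j 2 - m j 1)^2
        + (m j 3 - m j 2)^2 + (m j 3)^2) : ℤ) : ℚ) := by exact_mod_cast key
    linarith
  refine ⟨main1, fun x hx => ?_⟩
  by_cases hx0 : x = 0
  · subst hx0
    have : B 0 0 = 0 := by simp [B]
    rw [this]; norm_num
  · have := main1 x hx hx0
    intro hc
    rw [hc] at this
    norm_num at this
end
end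

section
/- For all i, j ∈ {0,1,2,3}: each of the vectors gⁱ(μ) and gⁱ(ν) has integer B-pairing with every element of N; B(gⁱ(μ), gʲ(μ)) ∈ ℤ, B(gⁱ(ν), gʲ(ν)) ∈ ℤ and B(gⁱ(μ), gʲ(ν)) ∈ ℤ; B(gⁱ(μ), gⁱ(μ)) ∈ 2ℤ and B(gⁱ(ν), gⁱ(ν)) ∈ 2ℤ; and moreover B(μ, μ) = B(ν, ν) = −4. -/
noncomputable section

set_option maxHeartbeats 1000000

/-- Coefficient vector: `c v j k = B v (a j k)` essentially. -/
def c (v : V) : V := fun j =>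
  ![-2*(2*v j 0 - v j 1), -2*(-(v j 0) + 2*v j 1 - v j 2),
    -2*(-(v j 1) + 2*v j 2 - v j 3), -2*(-(v j 2) + 2*v j 3)]

lemma Bval (v w : V) : B v w = ∑ j : Fin 4, ∑ k : Fin 4, c v j k * w j k := by
  simp (config := { decide := true }) [B, c, CartanA4, Fin.sum_univ_four]
  ring

/-- integer tables (doubled) for the iterates of μ and ν -/
def Mμ' : Fin 4 → Fin 4 → Fin 4 → ℤ := fun i _ k => if k = i then 1 else 0

def Mν' : Fin 4 → Fin 4 → Fin 4 → ℤ :=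
  ![![![0,0,0,0], ![1,0,0,0], ![0,0,1,1], ![1,0,1,1]],
    ![![0,0,0,0], ![0,1,0,0], ![-1,-1,-1,0], ![-1,0,-1,0]],
    ![![0,0,0,0], ![0,0,1,0], ![0,-1,-1,-1], ![0,-1,0,-1]],
    ![![0,0,0,0], ![0,0,0,1], ![1,1,0,0], ![1,1,0,1]]]

def Mμ : Fin 4 → V := fun i j k => (Mμ' i j k : ℚ) / 2
def Mν : Fin 4 → V := fun i j k => (Mν' i j k : ℚ) / 2

lemma muM : μ = Mμ 0 := by
  funext j k
  fin_cases j <;> fin_cases k <;>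
    norm_num (config := { decide := true }) [μ, a, Mμ, Mμ']

lemma nuM : ν = Mν 0 := by
  funext j k
  fin_cases j <;> fin_cases k <;>
    norm_num (config := { decide := true }) [ν, a, Mν, Mν', Matrix.cons_val_zero,
      Matrix.cons_val_one, Matrix.head_cons, Matrix.cons_val_two, Matrix.cons_val_three,
      Matrix.tail_cons, Matrix.vecHead, Matrix.vecTail]

lemma gMμ : ∀ i : Fin 3, g (Mμ i.castSucc) = Mμ i.succ := by
  intro i
  fin_cases i <;> funext j k <;> fin_cases j <;> fin_cases k <;>
    norm_num (config := { decide := true }) [g, Mμ, Mμ', Matrix.cons_val_zero,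
      Matrix.cons_val_one, Matrix.head_cons, Matrix.cons_val_two, Matrix.cons_val_three,
      Matrix.tail_cons, Matrix.vecHead, Matrix.vecTail]

lemma gMν : ∀ i : Fin 3, g (Mν i.castSucc) = Mν i.succ := by
  intro i
  fin_cases i <;> funext j k <;> fin_cases j <;> fin_cases k <;>
    norm_num (config := { decide := true }) [g, Mν, Mν', Matrix.cons_val_zero,
      Matrix.cons_val_one, Matrix.head_cons, Matrix.cons_val_two, Matrix.cons_val_three,
      Matrix.tail_cons, Matrix.vecHead, Matrix.vecTail]

lemma gmu (i : Fin 4) : g^[(i : ℕ)] μ = Mμ i := by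
  fin_cases i
  · exact muM
  · show g^[1] μ = Mμ 1
    rw [Function.iterate_one, muM, show Mμ 1 = Mμ (0 : Fin 3).succ from rfl]
    exact gMμ 0
  · show g^[2] μ = Mμ 2
    rw [show (2:ℕ) = 1+1 from rfl, Function.iterate_succ_apply', Function.iterate_one, muM,
      show g (Mμ 0) = Mμ (0 : Fin 3).succ from gMμ 0]
    exact gMμ 1
  · show g^[3] μ = Mμ 3
    have h3 : g^[3] μ = g (g^[2] μ) := by
      rw [show (3:ℕ) = 2+1 from rfl, Function.iterate_succ_apply']
    have h2 : g^[2] μ = g (g^[1] μ) := by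
      rw [show (2:ℕ) = 1+1 from rfl, Function.iterate_succ_apply']
    rw [h3, h2, Function.iterate_one, muM,
      show g (Mμ 0) = Mμ (0 : Fin 3).succ from gMμ 0,
      show g (Mμ (0 : Fin 3).succ) = Mμ (1 : Fin 3).succ from gMμ 1,
      show g (Mμ (1 : Fin 3).succ) = Mμ (2 : Fin 3).succ from gMμ 2]
    rfl

lemma gnu (i : Fin 4) : g^[(i : ℕ)] ν = Mν i := by
  fin_cases i
  · exact nuM
  · show g^[1] ν = Mν 1
    rw [Function.iterate_one, nuM]
    exact gMν 0
  · show g^[2] ν = Mν 2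
    rw [show (2:ℕ) = 1+1 from rfl, Function.iterate_succ_apply', Function.iterate_one, nuM,
      show g (Mν 0) = Mν (0 : Fin 3).succ from gMν 0]
    exact gMν 1
  · show g^[3] ν = Mν 3
    have h3 : g^[3] ν = g (g^[2] ν) := by
      rw [show (3:ℕ) = 2+1 from rfl, Function.iterate_succ_apply']
    have h2 : g^[2] ν = g (g^[1] ν) := by
      rw [show (2:ℕ) = 1+1 from rfl, Function.iterate_succ_apply']
    rw [h3, h2, Function.iterate_one, nuM,
      show g (Mν 0) = Mν (0 : Fin 3).succ from gMν 0,
      show g (Mν (0 : Fin 3).succ) = Mν (1 : Fin 3).succ from gMν 1,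
      show g (Mν (1 : Fin 3).succ) = Mν (2 : Fin 3).succ from gMν 2]
    rfl

/-- If `v` is half-integral then all coefficients `c v j k` are integers. -/
lemma half_c (v : V) (hv : ∀ j k : Fin 4, ∃ m : ℤ, v j k = (m : ℚ)/2) :
    ∀ j k : Fin 4, ∃ n : ℤ, c v j k = (n : ℚ) := by
  intro j k
  obtain ⟨m0, h0⟩ := hv j 0
  obtain ⟨m1, h1⟩ := hv j 1
  obtain ⟨m2, h2⟩ := hv j 2
  obtain ⟨m3, h3⟩ := hv j 3
  fin_cases k
  · exact ⟨m1 - 2*m0, by simp [c, h0, h1]; ring⟩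
  · exact ⟨m0 - 2*m1 + m2, by simp [c, h0, h1, h2]; ring⟩
  · exact ⟨m1 - 2*m2 + m3, by simp [c, h0, h1, h2, h3]; ring⟩
  · exact ⟨m2 - 2*m3, by simp [c, h2, h3]; ring⟩

lemma half_Mμ (i : Fin 4) : ∀ j k : Fin 4, ∃ m : ℤ, Mμ i j k = (m : ℚ)/2 :=
  fun j k => ⟨Mμ' i j k, rfl⟩

lemma half_Mν (i : Fin 4) : ∀ j k : Fin 4, ∃ m : ℤ, Mν i j k = (m : ℚ)/2 :=
  fun j k => ⟨Mν' i j k, rfl⟩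

/-- Integrality of pairing with lattice vectors. -/
lemma pairN (v : V) (hv : ∀ j k : Fin 4, ∃ n : ℤ, c v j k = (n : ℚ)) :
    ∀ x ∈ N, ∃ n : ℤ, B v x = (n : ℚ) := by
  intro x hx
  have hx' : ∀ j k : Fin 4, ∃ m : ℤ, x j k = (m : ℚ) := by
    intro j k
    have h1 := (AddSubgroup.mem_pi _).mp hx j (Set.mem_univ j)
    have h2 := (AddSubgroup.mem_pi _).mp h1 k (Set.mem_univ k)
    obtain ⟨m, hm⟩ := h2
    exact ⟨m, hm.symm⟩
  choose nc hc using hv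
  choose m hm using hx'
  refine ⟨∑ j : Fin 4, ∑ k : Fin 4, nc j k * m j k, ?_⟩
  rw [Bval]
  push_cast
  exact Finset.sum_congr rfl fun j _ => Finset.sum_congr rfl fun k _ => by rw [hc j k, hm j k]

def tμμ : Fin 4 → Fin 4 → ℤ :=
  ![![-4,2,0,0], ![2,-4,2,0], ![0,2,-4,2], ![0,0,2,-4]]

def tμν : Fin 4 → Fin 4 → ℤ :=
  ![![-2,2,-1,-1], ![2,-2,2,-1], ![-1,2,-2,2], ![-1,-1,2,-2]]

lemma Tμμ (i j : Fin 4) : B (Mμ i) (Mμ j) = (tμμ i j : ℚ) := by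
  fin_cases i <;> fin_cases j <;>
    norm_num (config := { decide := true }) [Bval, c, Mμ, Mμ', tμμ, Fin.sum_univ_four,
      Matrix.cons_val_zero, Matrix.cons_val_one, Matrix.head_cons, Matrix.cons_val_two,
      Matrix.cons_val_three, Matrix.tail_cons, Matrix.vecHead, Matrix.vecTail]

lemma Tνν (i j : Fin 4) : B (Mν i) (Mν j) = (tμμ i j : ℚ) := by
  fin_cases i <;> fin_cases j <;>
    norm_num (config := { decide := true }) [Bval, c, Mν, Mν', tμμ, Fin.sum_univ_four,
      Matrix.cons_val_zero, Matrix.cons_val_one, Matrix.head_cons, Matrix.cons_val_two,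
      Matrix.cons_val_three, Matrix.tail_cons, Matrix.vecHead, Matrix.vecTail]

lemma Tμν (i j : Fin 4) : B (Mμ i) (Mν j) = (tμν i j : ℚ) := by
  fin_cases i <;> fin_cases j <;>
    norm_num (config := { decide := true }) [Bval, c, Mμ, Mμ', Mν, Mν', tμν, Fin.sum_univ_four,
      Matrix.cons_val_zero, Matrix.cons_val_one, Matrix.head_cons, Matrix.cons_val_two,
      Matrix.cons_val_three, Matrix.tail_cons, Matrix.vecHead, Matrix.vecTail]

lemma tμμ_diag (i : Fin 4) : (tμμ i i : ℚ) = 2 * ((-2 : ℤ) : ℚ) := by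
  fin_cases i <;> norm_num [tμμ]

lemma Bmumu : B μ μ = -4 := by
  rw [muM, Tμμ]; norm_num [tμμ, Matrix.cons_val_zero]

lemma Bnunu : B ν ν = -4 := by
  rw [nuM, Tνν]; norm_num [tμμ, Matrix.cons_val_zero]

/-- Integrality properties of the pairings of the vectors `gⁱ(μ)`, `gⁱ(ν)` with `N` and with
each other, and `B(μ,μ) = B(ν,ν) = -4`. -/
theorem stmt4 :
    ∀ i j : Fin 4,
      (∀ x ∈ N, ∃ n : ℤ, B (g^[(i : ℕ)] μ) x = (n : ℚ)) ∧
      (∀ x ∈ N, ∃ n : ℤ, B (g^[(i : ℕ)] ν) x = (n : ℚ)) ∧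
      (∃ n : ℤ, B (g^[(i : ℕ)] μ) (g^[(j : ℕ)] μ) = (n : ℚ)) ∧
      (∃ n : ℤ, B (g^[(i : ℕ)] ν) (g^[(j : ℕ)] ν) = (n : ℚ)) ∧
      (∃ n : ℤ, B (g^[(i : ℕ)] μ) (g^[(j : ℕ)] ν) = (n : ℚ)) ∧
      (∃ n : ℤ, B (g^[(i : ℕ)] μ) (g^[(i : ℕ)] μ) = 2 * (n : ℚ)) ∧
      (∃ n : ℤ, B (g^[(i : ℕ)] ν) (g^[(i : ℕ)] ν) = 2 * (n : ℚ)) ∧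
      B μ μ = -4 ∧ B ν ν = -4 := by
  intro i j
  exact ⟨by rw [gmu]; exact pairN (Mμ i) (half_c _ (half_Mμ i)),
    by rw [gnu]; exact pairN (Mν i) (half_c _ (half_Mν i)),
    ⟨tμμ i j, by rw [gmu, gmu, Tμμ]⟩,
    ⟨tμμ i j, by rw [gnu, gnu, Tνν]⟩,
    ⟨tμν i j, by rw [gmu, gnu, Tμν]⟩,
    ⟨-2, by rw [gmu, Tμμ, tμμ_diag]⟩,
    ⟨-2, by rw [gnu, Tνν, tμμ_diag]⟩,
    Bmumu, Bnunu⟩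
end
end

section
/- Let S = diag(1, ω³, ω, ω²) ∈ GL₄(ℂ) and let T ∈ GL₄(ℂ) be the permutation matrix swapping the 0-th with the 1st and the 2nd with the 3rd basis vectors. Then T·S·T⁻¹ = ω³·S⁻¹ (as matrices), and the images of S and T in the projective general linear group PGL₄(ℂ) = GL₄(ℂ)/(scalars) generate a subgroup isomorphic to the dihedral group DihedralGroup 5 of order 10. -/
open Matrix

noncomputable section

/-- The diagonal matrix `S = diag(1, ω³, ω, ω²)`. -/
def S4 (ω : ℂ) : Matrix (Fin 4) (Fin 4) ℂ := Matrix.diagonal ![1, ω ^ 3, ω, ω ^ 2]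

/-- The permutation matrix `T` swapping the 0-th with the 1st and the 2nd with the 3rd basis
vectors. -/
def T4 : Matrix (Fin 4) (Fin 4) ℂ :=
  Matrix.of ![![0, 1, 0, 0], ![1, 0, 0, 0], ![0, 0, 0, 1], ![0, 0, 1, 0]]

/-- The projective general linear group `PGL₄(ℂ) = GL₄(ℂ)/(scalars)`; over the field `ℂ` the
scalar matrices are exactly the center of `GL₄(ℂ)`. -/
abbrev PGL4 : Type := GL (Fin 4) ℂ ⧸ Subgroup.center (GL (Fin 4) ℂ)


lemma dihedral_aux {G : Type*} [Group G] (s t : G) (hs : s ^ 5 = 1) (ht : t * t = 1)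
    (hst : t * s * t⁻¹ = s⁻¹)
    (hs1 : ∀ k : ℕ, 0 < k → k < 5 → s ^ k ≠ 1) (hts1 : ∀ k : ℕ, t * s ^ k ≠ 1) :
    Nonempty ((Subgroup.closure ({s, t} : Set G)) ≃* DihedralGroup 5) := by
  have hpow : ∀ a b : ℕ, (a : ZMod 5) = (b : ZMod 5) → s ^ a = s ^ b := by
    intro a b hab
    rw [ZMod.natCast_eq_natCast_iff] at hab
    rw [pow_eq_pow_mod a hs, pow_eq_pow_mod b hs, hab]
  have hsinv : s⁻¹ = s ^ 4 := by
    rw [eq_comm, ← mul_eq_one_iff_eq_inv]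
    rw [← pow_succ]
    exact hs
  have hts : ∀ n : ℕ, t * s ^ n = s ^ (4 * n) * t := by
    intro n
    induction n with
    | zero => simp
    | succ n ih =>
      have h1 : t * s = s ^ 4 * t := by
        rw [← hsinv, ← hst]; group
      calc t * s ^ (n + 1) = (t * s ^ n) * s := by rw [pow_succ, mul_assoc]
        _ = s ^ (4 * n) * (t * s) := by rw [ih]; group
        _ = s ^ (4 * n) * (s ^ 4 * t) := by rw [h1]
        _ = s ^ (4 * (n + 1)) * t := by rw [← mul_assoc, ← pow_add]; ring_nf
  have hst' : ∀ n : ℕ, s ^ n * t = t * s ^ (4 * n) := by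
    intro n
    rw [hts (4 * n), ← mul_assoc]
    congr 1
    exact hpow n (4 * 4 * n) (by push_cast; linear_combination (-3 * (n : ZMod 5)) * (ZMod.natCast_self 5))
  have hvv : ∀ i : ZMod 5, ((i.val : ZMod 5)) = i := fun i => ZMod.natCast_rightInverse i
  let f : DihedralGroup 5 → G := fun x => match x with
    | .r i => s ^ i.val
    | .sr i => t * s ^ i.val
  have hmul : ∀ x y : DihedralGroup 5, f (x * y) = f x * f y := by
    rintro (i | i) (j | j)
    · show s ^ (i + j).val = s ^ i.val * s ^ j.val
      rw [← pow_add]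
      exact hpow _ _ (by push_cast [hvv]; simp [hvv])
    · show t * s ^ (j - i).val = s ^ i.val * (t * s ^ j.val)
      rw [hts j.val, hts ((j-i).val), ← mul_assoc, ← pow_add]
      congr 1
      refine hpow _ _ ?_
      push_cast [hvv]
      linear_combination (-(i : ZMod 5)) * (ZMod.natCast_self 5)
    · show t * s ^ (i + j).val = (t * s ^ i.val) * s ^ j.val
      rw [mul_assoc, ← pow_add]
      congr 1
      exact hpow _ _ (by push_cast [hvv]; simp)
    · show s ^ (j - i).val = (t * s ^ i.val) * (t * s ^ j.val)
      conv_rhs => rw [hts i.val]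
      rw [mul_assoc, ← mul_assoc t t, ht, one_mul, ← pow_add]
      refine hpow _ _ ?_
      push_cast [hvv]
      linear_combination (-(i : ZMod 5)) * (ZMod.natCast_self 5)
  let φ : DihedralGroup 5 →* G := MonoidHom.mk' f hmul
  have hinj : Function.Injective φ := by
    rw [injective_iff_map_eq_one]
    rintro (i | i) h
    · have : s ^ i.val = 1 := h
      have hlt : i.val < 5 := i.val_lt
      rcases Nat.eq_zero_or_pos i.val with h0 | h0
      · rw [DihedralGroup.one_def]
        congr 1
        rwa [← ZMod.val_eq_zero]
      · exact absurd this (hs1 i.val h0 hlt)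
    · exact absurd h (hts1 i.val)
  have hrange : φ.range = Subgroup.closure ({s, t} : Set G) := by
    apply le_antisymm
    · rintro x ⟨y, rfl⟩
      have hsm : s ∈ Subgroup.closure ({s, t} : Set G) :=
        Subgroup.subset_closure (by simp)
      have htm : t ∈ Subgroup.closure ({s, t} : Set G) :=
        Subgroup.subset_closure (by simp)
      rcases y with i | i
      · exact pow_mem hsm i.val
      · exact mul_mem htm (pow_mem hsm i.val)
    · have h1 : φ (.r 1) = s := by
        show s ^ (1 : ZMod 5).val = s
        rw [show (1 : ZMod 5).val = 1 from rfl, pow_one]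
      have h2 : φ (.sr 0) = t := by
        show t * s ^ (0 : ZMod 5).val = t
        simp
      rw [Subgroup.closure_le]
      rintro x (rfl | rfl)
      · exact ⟨.r 1, h1⟩
      · exact ⟨.sr 0, h2⟩
  exact ⟨(MulEquiv.subgroupCongr hrange.symm).trans (MonoidHom.ofInjective hinj).symm⟩

/-- `T·S·T⁻¹ = ω³·S⁻¹`, and the images of `S` and `T` in `PGL₄(ℂ)` generate a subgroup
isomorphic to the dihedral group of order `10`. -/
theorem stmt16 (ω : ℂ) (hω : IsPrimitiveRoot ω 5) :
    T4 * S4 ω * T4⁻¹ = ω ^ 3 • (S4 ω)⁻¹ ∧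
    ∃ SU TU : GL (Fin 4) ℂ,
      (SU : Matrix (Fin 4) (Fin 4) ℂ) = S4 ω ∧ (TU : Matrix (Fin 4) (Fin 4) ℂ) = T4 ∧
      Nonempty ((Subgroup.closure
          ({QuotientGroup.mk' (Subgroup.center (GL (Fin 4) ℂ)) SU,
            QuotientGroup.mk' (Subgroup.center (GL (Fin 4) ℂ)) TU} : Set PGL4)) ≃*
        DihedralGroup 5) := by
  have hω5 : ω ^ 5 = 1 := hω.pow_eq_one
  have hωne : ω ≠ 0 := hω.ne_zero (by norm_num)
  set d : Fin 4 → ℂ := ![1, ω ^ 3, ω, ω ^ 2] with hd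
  set dinv : Fin 4 → ℂ := ![1, ω ^ 2, ω ^ 4, ω ^ 3] with hdinv
  have hTT : T4 * T4 = 1 := by
    ext i j
    fin_cases i <;> fin_cases j <;>
      simp [T4, Matrix.mul_apply, Fin.sum_univ_four, Matrix.one_apply, Matrix.vecHead,
        Matrix.vecTail]
  have hSS : S4 ω * Matrix.diagonal dinv = 1 := by
    rw [S4, ← hd, Matrix.diagonal_mul_diagonal]
    ext i j
    fin_cases i <;> fin_cases j <;>
      simp [hd, hdinv, Matrix.diagonal_apply, Matrix.one_apply, Matrix.vecHead, Matrix.vecTail] <;>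
      linear_combination hω5
  have hSS' : Matrix.diagonal dinv * S4 ω = 1 := by
    rw [S4, ← hd, Matrix.diagonal_mul_diagonal]
    ext i j
    fin_cases i <;> fin_cases j <;>
      simp [hd, hdinv, Matrix.diagonal_apply, Matrix.one_apply, Matrix.vecHead, Matrix.vecTail] <;>
      linear_combination hω5
  have hTinv : T4⁻¹ = T4 := Matrix.inv_eq_right_inv hTT
  have hSinv : (S4 ω)⁻¹ = Matrix.diagonal dinv := Matrix.inv_eq_right_inv hSS
  have part1' : T4 * S4 ω * T4 = ω ^ 3 • Matrix.diagonal dinv := by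
    rw [S4, ← hd]
    ext i j
    rw [Matrix.mul_apply, Matrix.smul_apply]
    simp only [Matrix.mul_diagonal]
    fin_cases i <;> fin_cases j <;>
      simp [T4, hd, hdinv, Fin.sum_univ_four, Matrix.diagonal_apply, Matrix.vecHead,
        Matrix.vecTail] <;>
      first
      | linear_combination -hω5
      | linear_combination -(ω ^ 2) * hω5
      | linear_combination -ω * hω5
  have part1 : T4 * S4 ω * T4⁻¹ = ω ^ 3 • (S4 ω)⁻¹ := by
    rw [hTinv, hSinv, part1']
  refine ⟨part1, ?_⟩
  -- the units
  set SU : GL (Fin 4) ℂ := ⟨S4 ω, Matrix.diagonal dinv, hSS, hSS'⟩ with hSU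
  set TU : GL (Fin 4) ℂ := ⟨T4, T4, hTT, hTT⟩ with hTU
  refine ⟨SU, TU, rfl, rfl, ?_⟩
  have hSUval : (SU : Matrix (Fin 4) (Fin 4) ℂ) = S4 ω := rfl
  have hTUval : (TU : Matrix (Fin 4) (Fin 4) ℂ) = T4 := rfl
  have hSUpow : ∀ k : ℕ, ((SU ^ k : GL (Fin 4) ℂ) : Matrix (Fin 4) (Fin 4) ℂ)
      = Matrix.diagonal (d ^ k) := by
    intro k
    rw [Units.val_pow_eq_pow_val, hSUval, S4, ← hd, Matrix.diagonal_pow]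
  -- S^5 = 1
  have hSU5 : SU ^ 5 = 1 := by
    apply Units.ext
    rw [hSUpow 5, Units.val_one]
    ext i j
    fin_cases i <;> fin_cases j <;>
      simp [hd, Matrix.diagonal_apply, Matrix.one_apply, Matrix.vecHead, Matrix.vecTail] <;>
      first
      | linear_combination (ω ^ 10 + ω ^ 5 + 1) * hω5
      | linear_combination hω5
      | linear_combination (ω ^ 5 + 1) * hω5
  have hTU2 : TU * TU = 1 := by
    apply Units.ext
    rw [Units.val_mul, hTUval, hTT, Units.val_one]
  -- the central element
  have hX : TU * SU * TU * SU ∈ Subgroup.center (GL (Fin 4) ℂ) := by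
    have hXval : ((TU * SU * TU * SU : GL (Fin 4) ℂ) : Matrix (Fin 4) (Fin 4) ℂ)
        = (ω ^ 3 : ℂ) • (1 : Matrix (Fin 4) (Fin 4) ℂ) := by
      rw [Units.val_mul, Units.val_mul, Units.val_mul, hSUval, hTUval, part1',
        Matrix.smul_mul, hSS']
    rw [Subgroup.mem_center_iff]
    intro g
    apply Units.ext
    rw [Units.val_mul g (TU * SU * TU * SU), Units.val_mul (TU * SU * TU * SU) g, hXval,
      Matrix.mul_smul, Matrix.smul_mul, mul_one, one_mul]
  -- pass to the quotient
  set C := Subgroup.center (GL (Fin 4) ℂ) with hC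
  set π := QuotientGroup.mk' C with hπ
  set s : PGL4 := π SU with hs_def
  set t : PGL4 := π TU with ht_def
  have hs5 : s ^ 5 = 1 := by rw [hs_def, ← map_pow, hSU5, _root_.map_one]
  have ht2 : t * t = 1 := by rw [ht_def, ← _root_.map_mul, hTU2, _root_.map_one]
  have htst : t * s * t * s = 1 := by
    rw [hs_def, ht_def, ← _root_.map_mul, ← _root_.map_mul, ← _root_.map_mul]
    exact (QuotientGroup.eq_one_iff _).mpr hX
  have hst : t * s * t⁻¹ = s⁻¹ := by
    have htinv : t⁻¹ = t := inv_eq_of_mul_eq_one_right ht2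
    rw [htinv]
    exact eq_inv_of_mul_eq_one_left htst
  have hT401 : T4 0 1 = 1 := by simp [T4]
  have hd0 : d 0 = 1 := rfl
  have hd1 : d 1 = ω ^ 3 := rfl
  have hω3k : ∀ k : ℕ, (ω ^ 3) ^ k ≠ 0 := fun k => pow_ne_zero _ (pow_ne_zero _ hωne)
  have hs1 : ∀ k : ℕ, 0 < k → k < 5 → s ^ k ≠ 1 := by
    intro k hk1 hk2 h
    rw [hs_def, ← map_pow] at h
    have hmem : SU ^ k ∈ C := (QuotientGroup.eq_one_iff _).mp h
    have hcomm := (Subgroup.mem_center_iff.mp hmem) TU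
    have hval := congrArg Units.val hcomm
    rw [Units.val_mul, Units.val_mul, hTUval, hSUpow k] at hval
    have h01 := congrFun (congrFun hval 0) 1
    simp only [Matrix.mul_diagonal, Matrix.diagonal_mul, hT401, Pi.pow_apply, hd0, hd1,
      mul_one, one_pow, one_mul] at h01
    have h3k : ω ^ (3 * k) = 1 := by rw [pow_mul]; exact h01
    have hdvd : (5 : ℕ) ∣ 3 * k := (IsPrimitiveRoot.pow_eq_one_iff_dvd hω _).mp h3k
    have h5k : (5 : ℕ) ∣ k := by
      rcases (Nat.Prime.dvd_mul (by norm_num)).mp hdvd with h | h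
      · norm_num at h
      · exact h
    have := Nat.le_of_dvd hk1 h5k
    omega
  have hts1 : ∀ k : ℕ, t * s ^ k ≠ 1 := by
    intro k h
    rw [hs_def, ht_def, ← map_pow, ← _root_.map_mul] at h
    have hmem : TU * SU ^ k ∈ C := (QuotientGroup.eq_one_iff _).mp h
    have hcomm := (Subgroup.mem_center_iff.mp hmem) SU
    have hval := congrArg Units.val hcomm
    rw [Units.val_mul, Units.val_mul, Units.val_mul, Units.val_mul, hTUval, hSUval,
      hSUpow k, S4, ← hd] at hval
    have h01 := congrFun (congrFun hval 0) 1
    simp only [Matrix.mul_diagonal, Matrix.diagonal_mul, hT401, Pi.pow_apply, hd0, hd1,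
      one_mul] at h01
    have h01' : (ω ^ 3) ^ k * 1 = (ω ^ 3) ^ k * ω ^ 3 := by rw [mul_one]; exact h01
    have hω3 : ω ^ 3 = 1 := mul_left_cancel₀ (hω3k k) h01'.symm
    have : (5 : ℕ) ∣ 3 := (IsPrimitiveRoot.pow_eq_one_iff_dvd hω _).mp hω3
    norm_num at this
  have hsm : s ∈ ({π SU, π TU} : Set PGL4) := Set.mem_insert _ _
  have htm : t ∈ ({π SU, π TU} : Set PGL4) := Set.mem_insert_of_mem _ rfl
  have : ({QuotientGroup.mk' (Subgroup.center (GL (Fin 4) ℂ)) SU,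
      QuotientGroup.mk' (Subgroup.center (GL (Fin 4) ℂ)) TU} : Set PGL4) = {s, t} := rfl
  rw [this]
  exact dihedral_aux s t hs5 ht2 hst hs1 hts1

end
end
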